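/- arXiv:1605.05854 — 4 statements merged into one kernel-verified Lean document; each statement's English description precedes it below -/
import Mathlib

section
/- Let d, N ≥ 1, σ > 0, and let W : (ℝ^d)^N → ℝ be continuous, bounded, and ℤ^d-periodic in each of its N arguments. Define Z₁ = ∫_{([0,1]^d)^N} e^{-W/σ}, Ẑ₁ = ∫_{([0,1]^d)^N} e^{W/σ}, and for a unit vector e ∈ ℝ^d define m(e) = (1/Z₁) · inf { ∫_{([0,1]^d)^N} |e + ∇v₁(y₁) + ⋯ + ∇v_N(y_N)|² e^{-W(y₁,…,y_N)/σ} dy : v₁,…,v_N : ℝ^d → ℝ C¹ and ℤ^d-periodic }. Then 0 < e^{-osc(W)/σ} ≤ 1/(Z₁·Ẑ₁) ≤ m(e) ≤ 1, where osc(W) = sup W − inf W. -/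
/-!
Over the unit cube the partial derivatives of a periodic `C¹` function have mean zero (divergence
theorem: the two faces `xⱼ = 0` and `xⱼ = 1` cancel). Hence for admissible correctors the function
`u = e · (e + ∑ᵢ ∇vᵢ(yᵢ))` has mean `|e|² = 1`, and Cauchy–Schwarz with the weights `e^{∓W/(2σ)}`
gives `1 ≤ (∫ u² e^{-W/σ}) · Ẑ₁ ≤ (∫ |e + ∑ᵢ ∇vᵢ(yᵢ)|² e^{-W/σ}) · Ẑ₁`, that is `m(e) ≥ 1/(Z₁ Ẑ₁)`.
The zero correctors give `m(e) ≤ 1`, and bounding `e^{∓W/σ}` by its extreme values gives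
`Z₁ Ẑ₁ ≤ e^{osc(W)/σ}`.
-/

open MeasureTheory

/-- Euclidean gradient of `f : ℝ^d → ℝ` as a vector of partial derivatives. -/
noncomputable def grad {d : ℕ} (f : (Fin d → ℝ) → ℝ) (x : Fin d → ℝ) : Fin d → ℝ :=
  fun i => fderiv ℝ f x (Pi.single i 1)

/-- `f : ℝ^d → ℝ` is `ℤ^d`-periodic. -/
def ZdPeriodic {d : ℕ} (f : (Fin d → ℝ) → ℝ) : Prop :=
  ∀ (x : Fin d → ℝ) (k : Fin d → ℤ), f (x + fun i => (k i : ℝ)) = f x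

/-- The variational quadratic form `m(e)` of the effective diffusion tensor:
`m(e) = Z₁⁻¹ · inf { ∫ |e + ∇v₁(y₁) + ⋯ + ∇v_N(y_N)|² e^{-W/σ} : vᵢ C¹, ℤ^d-periodic }`. -/
noncomputable def mEff (d N : ℕ) (σ : ℝ) (W : (Fin N → Fin d → ℝ) → ℝ) (e : Fin d → ℝ) : ℝ :=
  (∫ y in Set.Icc (0 : Fin N → Fin d → ℝ) 1, Real.exp (-W y / σ))⁻¹ *
    sInf { r : ℝ | ∃ v : Fin N → (Fin d → ℝ) → ℝ,
      (∀ i, ContDiff ℝ 1 (v i)) ∧ (∀ i, ZdPeriodic (v i)) ∧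
      r = ∫ y in Set.Icc (0 : Fin N → Fin d → ℝ) 1,
            (∑ j, (e j + ∑ i, grad (v i) (y i) j) ^ 2) * Real.exp (-W y / σ) }

open Set

lemma volume_Icc_zero_one_pi {ι α : Type*} [Fintype ι] [MeasureSpace α]
    [SigmaFinite (volume : Measure α)] [Preorder α] [Zero α] [One α]
    (h : volume (Icc (0 : α) 1) = 1) : volume (Icc (0 : ι → α) 1) = 1 := by
  rw [← pi_univ_Icc, volume_pi_pi]
  simp [h]

lemma setIntegral_Icc_pi_comp_eval {ι α E : Type*} [Fintype ι] [MeasureSpace α]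
    [SigmaFinite (volume : Measure α)] [Preorder α] [Zero α] [One α]
    [NormedAddCommGroup E] [NormedSpace ℝ E]
    (h : volume (Icc (0 : α) 1) = 1) (i : ι) {g : α → E}
    (hg : AEStronglyMeasurable g (volume.restrict (Icc 0 1))) :
    ∫ y in Icc (0 : ι → α) 1, g (y i) = ∫ x in Icc (0 : α) 1, g x := by
  have : IsProbabilityMeasure (volume.restrict (Icc (0 : α) 1)) :=
    ⟨by rw [Measure.restrict_apply_univ, h]⟩
  rw [← pi_univ_Icc, volume_pi, Measure.restrict_pi_pi]
  exact integral_comp_eval hg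

lemma ContDiff.continuous_grad {d : ℕ} {v : (Fin d → ℝ) → ℝ} (hv : ContDiff ℝ 1 v) (j : Fin d) :
    Continuous fun x => grad v x j :=
  (hv.continuous_fderiv one_ne_zero).clm_apply continuous_const

lemma ZdPeriodic.apply_insertNth_one {n : ℕ} {v : (Fin (n + 1) → ℝ) → ℝ} (hv : ZdPeriodic v)
    (j : Fin (n + 1)) (z : Fin n → ℝ) :
    v (j.insertNth 1 z) = v (j.insertNth 0 z) := by
  have hshift : (j.insertNth 1 z : Fin (n + 1) → ℝ)
      = j.insertNth 0 z + fun i => ((Pi.single j 1 : Fin (n + 1) → ℤ) i : ℝ) := by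
    ext i
    rcases eq_or_ne i j with rfl | hij
    · simp
    · obtain ⟨k, rfl⟩ := Fin.exists_succAbove_eq hij
      simp [hij]
  rw [hshift, hv]

lemma integral_grad_unitCube_eq_zero {d : ℕ} {v : (Fin d → ℝ) → ℝ} (hv : ContDiff ℝ 1 v)
    (hper : ZdPeriodic v) (j : Fin d) :
    ∫ x in Icc (0 : Fin d → ℝ) 1, grad v x j = 0 := by
  obtain ⟨n, rfl⟩ : ∃ n, d = n + 1 := ⟨d - 1, by have := j.pos; omega⟩
  -- divergence theorem for the field `v • eⱼ`; periodicity cancels the faces `xⱼ = 0, 1`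
  have hdiv : ∀ x, ∑ i, (if i = j then fderiv ℝ v x else 0) (Pi.single i 1) = grad v x j := by
    intro x
    rw [Finset.sum_eq_single j (fun i _ hi => by simp [hi]) (by simp)]
    simp [grad]
  have := integral_divergence_of_hasFDerivAt_off_countable' 0 1 zero_le_one
    (fun i x => if i = j then v x else 0) (fun i x => if i = j then fderiv ℝ v x else 0) ∅
    countable_empty (fun i => by split_ifs <;> [exact hv.continuous.continuousOn; fun_prop])
    (fun x _ i => by
      split_ifs
      · exact (hv.differentiable one_ne_zero x).hasFDerivAt
      · exact hasFDerivAt_const 0 x)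
    (by simpa only [hdiv] using (hv.continuous_grad j).integrableOn_Icc)
  simpa [hdiv, hper.apply_insertNth_one] using this

lemma sq_integral_mul_le_integral_mul_self_mul_integral_mul_self {α : Type*} [MeasurableSpace α]
    {μ : Measure α} {f g : α → ℝ} (hff : Integrable (fun x => f x * f x) μ)
    (hgg : Integrable (fun x => g x * g x) μ) (hfg : Integrable (fun x => f x * g x) μ) :
    (∫ x, f x * g x ∂μ) ^ 2 ≤ (∫ x, f x * f x ∂μ) * ∫ x, g x * g x ∂μ := by
  have hquad : ∀ t : ℝ, 0 ≤ (∫ x, g x * g x ∂μ) * (t * t) + 2 * (∫ x, f x * g x ∂μ) * t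
      + ∫ x, f x * f x ∂μ := by
    intro t
    have hsq : 0 ≤ ∫ x, (f x + t * g x) * (f x + t * g x) ∂μ :=
      integral_nonneg fun x => mul_self_nonneg _
    have hexpand : (fun x => (f x + t * g x) * (f x + t * g x))
        = fun x => f x * f x + 2 * t * (f x * g x) + t * t * (g x * g x) := by
      funext x; ring
    have hlin : Integrable (fun x => f x * f x + 2 * t * (f x * g x)) μ :=
      hff.add (hfg.const_mul _)
    rw [hexpand, integral_add hlin (hgg.const_mul _),
      integral_add hff (hfg.const_mul _), integral_const_mul, integral_const_mul] at hsq
    linarith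
  have := discrim_le_zero hquad
  rw [discrim] at this
  nlinarith

lemma sq_integral_le_integral_mul_exp_neg_mul_integral_exp {α : Type*} [MeasurableSpace α]
    {μ : Measure α} {u φ : α → ℝ} (hu : Integrable u μ)
    (huφ : Integrable (fun x => u x ^ 2 * Real.exp (-φ x)) μ)
    (hφ : Integrable (fun x => Real.exp (φ x)) μ) :
    (∫ x, u x ∂μ) ^ 2 ≤ (∫ x, u x ^ 2 * Real.exp (-φ x) ∂μ) * ∫ x, Real.exp (φ x) ∂μ := by
  have hff : ∀ x, u x * Real.exp (-φ x / 2) * (u x * Real.exp (-φ x / 2))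
      = u x ^ 2 * Real.exp (-φ x) := fun x => by
    rw [mul_mul_mul_comm, ← Real.exp_add]; ring_nf
  have hgg : ∀ x, Real.exp (φ x / 2) * Real.exp (φ x / 2) = Real.exp (φ x) := fun x => by
    rw [← Real.exp_add]; ring_nf
  have hfg : ∀ x, u x * Real.exp (-φ x / 2) * Real.exp (φ x / 2) = u x := fun x => by
    rw [mul_assoc, ← Real.exp_add]; ring_nf; simp
  simpa only [hff, hgg, hfg] using
    sq_integral_mul_le_integral_mul_self_mul_integral_mul_self (μ := μ)
      (f := fun x => u x * Real.exp (-φ x / 2)) (g := fun x => Real.exp (φ x / 2))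
      (by simpa only [hff] using huφ) (by simpa only [hgg] using hφ) (by simpa only [hfg] using hu)

section UnitCube

variable {d N : ℕ}

lemma volume_unitCube : volume (Icc (0 : Fin d → ℝ) 1) = 1 := by
  simp [Real.volume_Icc_pi]

lemma volume_unitCube_pi : volume (Icc (0 : Fin N → Fin d → ℝ) 1) = 1 :=
  volume_Icc_zero_one_pi volume_unitCube

lemma setIntegral_unitCube_le_of_le {f : (Fin N → Fin d → ℝ) → ℝ} (hf : Continuous f) {c : ℝ}
    (h : ∀ y, f y ≤ c) : ∫ y in Icc (0 : Fin N → Fin d → ℝ) 1, f y ≤ c := by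
  calc ∫ y in Icc (0 : Fin N → Fin d → ℝ) 1, f y ≤ ∫ _ in Icc (0 : Fin N → Fin d → ℝ) 1, c :=
        setIntegral_mono_on hf.integrableOn_Icc (integrableOn_const (by simp [volume_unitCube_pi]))
          measurableSet_Icc fun y _ => h y
    _ = c := by simp [measureReal_def, volume_unitCube_pi]

lemma setIntegral_unitCube_exp_pos {f : (Fin N → Fin d → ℝ) → ℝ} (hf : Continuous f) :
    0 < ∫ y in Icc (0 : Fin N → Fin d → ℝ) 1, Real.exp (f y) := by
  have : NeZero (volume.restrict (Icc (0 : Fin N → Fin d → ℝ) 1)) :=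
    ⟨by simp [Measure.restrict_eq_zero, volume_unitCube_pi]⟩
  exact integral_exp_pos (Real.continuous_exp.comp hf).integrableOn_Icc

lemma setIntegral_unitCube_grad_comp_eval {v : (Fin d → ℝ) → ℝ} (hv : ContDiff ℝ 1 v)
    (hper : ZdPeriodic v) (i : Fin N) (j : Fin d) :
    ∫ y in Icc (0 : Fin N → Fin d → ℝ) 1, grad v (y i) j = 0 := by
  rw [setIntegral_Icc_pi_comp_eval volume_unitCube i (hv.continuous_grad j).aestronglyMeasurable]
  exact integral_grad_unitCube_eq_zero hv hper j

lemma setIntegral_unitCube_dot_add_sum_grad (e : Fin d → ℝ) {v : Fin N → (Fin d → ℝ) → ℝ}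
    (hv : ∀ i, ContDiff ℝ 1 (v i)) (hper : ∀ i, ZdPeriodic (v i)) :
    ∫ y in Icc (0 : Fin N → Fin d → ℝ) 1, ∑ j, e j * (e j + ∑ i, grad (v i) (y i) j)
      = ∑ j, e j ^ 2 := by
  have hgrad : ∀ i j, Continuous fun y : Fin N → Fin d → ℝ => grad (v i) (y i) j :=
    fun i j => ((hv i).continuous_grad j).comp (continuous_apply i)
  rw [integral_finsetSum _ fun j _ => (by fun_prop : Continuous _).integrableOn_Icc]
  refine Finset.sum_congr rfl fun j _ => ?_
  rw [integral_const_mul, integral_add continuous_const.integrableOn_Icc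
      (by fun_prop : Continuous _).integrableOn_Icc,
    integral_finsetSum _ fun i _ => (hgrad i j).integrableOn_Icc]
  simp [setIntegral_unitCube_grad_comp_eval (hv _) (hper _), measureReal_def, volume_unitCube_pi,
    sq]

end UnitCube

section Energy

variable {d N : ℕ} {σ : ℝ} {W : (Fin N → Fin d → ℝ) → ℝ}

lemma integral_exp_neg_mul_integral_exp_le (hσ : 0 < σ) (hW : Continuous W)
    (hWa : BddAbove (range W)) (hWb : BddBelow (range W)) :
    (∫ y in Icc (0 : Fin N → Fin d → ℝ) 1, Real.exp (-W y / σ)) *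
        ∫ y in Icc (0 : Fin N → Fin d → ℝ) 1, Real.exp (W y / σ)
      ≤ Real.exp ((sSup (range W) - sInf (range W)) / σ) := by
  have hZ : ∫ y in Icc (0 : Fin N → Fin d → ℝ) 1, Real.exp (-W y / σ)
      ≤ Real.exp (-sInf (range W) / σ) :=
    setIntegral_unitCube_le_of_le (by fun_prop) fun y =>
      Real.exp_le_exp.2 (by gcongr; exact csInf_le hWb ⟨y, rfl⟩)
  have hZhat : ∫ y in Icc (0 : Fin N → Fin d → ℝ) 1, Real.exp (W y / σ)
      ≤ Real.exp (sSup (range W) / σ) :=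
    setIntegral_unitCube_le_of_le (by fun_prop) fun y =>
      Real.exp_le_exp.2 (by gcongr; exact le_csSup hWa ⟨y, rfl⟩)
  calc _ ≤ Real.exp (-sInf (range W) / σ) * Real.exp (sSup (range W) / σ) :=
        mul_le_mul hZ hZhat (setIntegral_unitCube_exp_pos (by fun_prop)).le (Real.exp_pos _).le
    _ = _ := by rw [← Real.exp_add]; ring_nf

lemma one_le_energy_mul_integral_exp (hW : Continuous W) {e : Fin d → ℝ}
    (he : ∑ j, e j ^ 2 = 1) {v : Fin N → (Fin d → ℝ) → ℝ} (hv : ∀ i, ContDiff ℝ 1 (v i))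
    (hper : ∀ i, ZdPeriodic (v i)) :
    1 ≤ (∫ y in Icc (0 : Fin N → Fin d → ℝ) 1,
          (∑ j, (e j + ∑ i, grad (v i) (y i) j) ^ 2) * Real.exp (-W y / σ)) *
        ∫ y in Icc (0 : Fin N → Fin d → ℝ) 1, Real.exp (W y / σ) := by
  have hgrad : ∀ i j, Continuous fun y : Fin N → Fin d → ℝ => grad (v i) (y i) j :=
    fun i j => ((hv i).continuous_grad j).comp (continuous_apply i)
  set u := fun y : Fin N → Fin d → ℝ => ∑ j, e j * (e j + ∑ i, grad (v i) (y i) j)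
  have hu : Continuous u := by fun_prop
  have hmean : ∫ y in Icc (0 : Fin N → Fin d → ℝ) 1, u y = 1 :=
    (setIntegral_unitCube_dot_add_sum_grad e hv hper).trans he
  have hdot : ∀ y, u y ^ 2 ≤ ∑ j, (e j + ∑ i, grad (v i) (y i) j) ^ 2 := fun y => by
    simpa [he] using Finset.sum_mul_sq_le_sq_mul_sq Finset.univ e
      (fun j => e j + ∑ i, grad (v i) (y i) j)
  simp only [neg_div]
  calc 1 = (∫ y in Icc (0 : Fin N → Fin d → ℝ) 1, u y) ^ 2 := by rw [hmean, one_pow]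
    _ ≤ (∫ y in Icc (0 : Fin N → Fin d → ℝ) 1, u y ^ 2 * Real.exp (-(W y / σ))) *
          ∫ y in Icc (0 : Fin N → Fin d → ℝ) 1, Real.exp (W y / σ) :=
        sq_integral_le_integral_mul_exp_neg_mul_integral_exp (φ := fun y => W y / σ)
          hu.integrableOn_Icc (by fun_prop : Continuous _).integrableOn_Icc
          (by fun_prop : Continuous _).integrableOn_Icc
    _ ≤ _ := by
        gcongr with y
        · exact (by fun_prop : Continuous _).integrableOn_Icc
        · exact (by fun_prop : Continuous _).integrableOn_Icc
        · exact measurableSet_Icc.nullMeasurableSet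
        · exact hdot y

end Energy

theorem stmt2_general (d N : ℕ) (σ : ℝ) (hσ : 0 < σ)
    (W : (Fin N → Fin d → ℝ) → ℝ) (hWcont : Continuous W)
    (hWbdd : ∃ C : ℝ, ∀ y, |W y| ≤ C)
    (Z₁ Zhat₁ oscW : ℝ)
    (hZ₁ : Z₁ = ∫ y in Set.Icc (0 : Fin N → Fin d → ℝ) 1, Real.exp (-W y / σ))
    (hZhat₁ : Zhat₁ = ∫ y in Set.Icc (0 : Fin N → Fin d → ℝ) 1, Real.exp (W y / σ))
    (hosc : oscW = sSup (Set.range W) - sInf (Set.range W))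
    (e : Fin d → ℝ) (he : ∑ j, e j ^ 2 = 1) :
    0 < Real.exp (-oscW / σ) ∧
    Real.exp (-oscW / σ) ≤ 1 / (Z₁ * Zhat₁) ∧
    1 / (Z₁ * Zhat₁) ≤ mEff d N σ W e ∧
    mEff d N σ W e ≤ 1 := by
  obtain ⟨C, hC⟩ := hWbdd
  have hZ₁pos : 0 < Z₁ := hZ₁ ▸ setIntegral_unitCube_exp_pos (by fun_prop)
  have hZhat₁pos : 0 < Zhat₁ := hZhat₁ ▸ setIntegral_unitCube_exp_pos (by fun_prop)
  have hprod : Z₁ * Zhat₁ ≤ Real.exp (oscW / σ) := hZ₁ ▸ hZhat₁ ▸ hosc ▸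
    integral_exp_neg_mul_integral_exp_le hσ hWcont
      ⟨C, by rintro _ ⟨y, rfl⟩; exact (abs_le.1 (hC y)).2⟩
      ⟨-C, by rintro _ ⟨y, rfl⟩; exact (abs_le.1 (hC y)).1⟩
  set S := { r : ℝ | ∃ v : Fin N → (Fin d → ℝ) → ℝ,
      (∀ i, ContDiff ℝ 1 (v i)) ∧ (∀ i, ZdPeriodic (v i)) ∧
      r = ∫ y in Set.Icc (0 : Fin N → Fin d → ℝ) 1,
            (∑ j, (e j + ∑ i, grad (v i) (y i) j) ^ 2) * Real.exp (-W y / σ) }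
  have hmEff : mEff d N σ W e = Z₁⁻¹ * sInf S := by rw [mEff, ← hZ₁]
  have hlow : ∀ r ∈ S, 1 / Zhat₁ ≤ r := by
    rintro r ⟨v, hv, hper, rfl⟩
    rw [div_le_iff₀ hZhat₁pos, hZhat₁]
    exact one_le_energy_mul_integral_exp hWcont he hv hper
  have hZ₁mem : Z₁ ∈ S := ⟨0, fun _ => contDiff_const, fun _ _ _ => rfl, by simp [hZ₁, grad, he]⟩
  refine ⟨Real.exp_pos _, ?_, ?_, ?_⟩
  · rw [neg_div, Real.exp_neg, one_div]
    exact inv_anti₀ (mul_pos hZ₁pos hZhat₁pos) hprod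
  · rw [hmEff, one_div, mul_inv, ← one_div Zhat₁]
    gcongr
    exact le_csInf ⟨Z₁, hZ₁mem⟩ hlow
  · rw [hmEff, inv_mul_le_one₀ hZ₁pos]
    exact csInf_le ⟨_, hlow⟩ hZ₁mem

/-- For `W` continuous, bounded, `ℤ^d`-periodic in each of its `N` arguments,
and a unit vector `e`: `0 < e^{-osc(W)/σ} ≤ 1/(Z₁·Zhat₁) ≤ m(e) ≤ 1`. -/
theorem stmt2 (d N : ℕ) (hd : 1 ≤ d) (hN : 1 ≤ N) (σ : ℝ) (hσ : 0 < σ)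
    (W : (Fin N → Fin d → ℝ) → ℝ) (hWcont : Continuous W)
    (hWper : ∀ (y : Fin N → Fin d → ℝ) (i : Fin N) (k : Fin d → ℤ),
      W (Function.update y i (y i + fun j => (k j : ℝ))) = W y)
    (hWbdd : ∃ C : ℝ, ∀ y, |W y| ≤ C)
    (Z₁ Zhat₁ oscW : ℝ)
    (hZ₁ : Z₁ = ∫ y in Set.Icc (0 : Fin N → Fin d → ℝ) 1, Real.exp (-W y / σ))
    (hZhat₁ : Zhat₁ = ∫ y in Set.Icc (0 : Fin N → Fin d → ℝ) 1, Real.exp (W y / σ))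
    (hosc : oscW = sSup (Set.range W) - sInf (Set.range W))
    (e : Fin d → ℝ) (he : ∑ j, e j ^ 2 = 1) :
    0 < Real.exp (-oscW / σ) ∧
    Real.exp (-oscW / σ) ≤ 1 / (Z₁ * Zhat₁) ∧
    1 / (Z₁ * Zhat₁) ≤ mEff d N σ W e ∧
    mEff d N σ W e ≤ 1 :=
  stmt2_general d N σ hσ W hWcont hWbdd Z₁ Zhat₁ oscW hZ₁ hZhat₁ hosc e he
end

section
/- Let d ≥ 1, σ > 0, let V : ℝ^d → ℝ be a smooth ℤ^d-periodic function, and let θ : ℝ^d → ℝ^d be a C² ℤ^d-periodic vector field whose components satisfy ∇·(e^{-V(y)/σ}(∇θ_i(y) + e_i)) = 0 on ℝ^d for each standard basis vector e_i. Define the matrix K = ∫_{[0,1]^d} (I + Dθ(y)) e^{-V(y)/σ} dy, where Dθ is the Jacobian of θ. Then for every v ∈ ℝ^d, v·Kv ≥ |v|² / (∫_{[0,1]^d} e^{V(y)/σ} dy). In particular K is positive definite. -/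
open MeasureTheory Matrix

/-- Divergence of a vector field `F : ℝ^d → ℝ^d`. -/
noncomputable def diverg {d : ℕ} (F : (Fin d → ℝ) → (Fin d → ℝ)) (y : Fin d → ℝ) : ℝ :=
  ∑ i, fderiv ℝ (fun x => F x i) y (Pi.single i 1)

/-- Jacobian matrix `(Dθ)_{ij} = ∂θ_i/∂y_j` of a vector field `θ : ℝ^d → ℝ^d`. -/
noncomputable def jacobian {d : ℕ} (θ : (Fin d → ℝ) → (Fin d → ℝ)) (y : Fin d → ℝ) :
    Matrix (Fin d) (Fin d) ℝ :=
  Matrix.of fun i j => fderiv ℝ (fun x => θ x i) y (Pi.single j 1)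

/-- The intermediary effective tensor `K = ∫_{[0,1]^d} (I + Dθ(y)) e^{-V(y)/σ} dy`,
defined entrywise. -/
noncomputable def effTensor (d : ℕ) (σ : ℝ) (V : (Fin d → ℝ) → ℝ)
    (θ : (Fin d → ℝ) → (Fin d → ℝ)) : Matrix (Fin d) (Fin d) ℝ :=
  Matrix.of fun i j =>
    ∫ y in Set.Icc (0 : Fin d → ℝ) 1, Real.exp (-V y / σ) * ((1 + jacobian θ y) i j)

namespace Stmt5Aux

lemma fderiv_shift {d : ℕ} {g : (Fin d → ℝ) → ℝ} (hg : Differentiable ℝ g)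
    (hper : ZdPeriodic g) (x : Fin d → ℝ) (k : Fin d → ℤ) :
    fderiv ℝ g (x + fun i => (k i : ℝ)) = fderiv ℝ g x := by
  set c : Fin d → ℝ := fun i => (k i : ℝ) with hc
  have h1 : HasFDerivAt (fun y => g (y + c)) (fderiv ℝ g (x + c)) x := by
    have h2 : HasFDerivAt (fun y : Fin d → ℝ => y + c) (ContinuousLinearMap.id ℝ _) x :=
      (hasFDerivAt_id x).add_const c
    have := (hg (x + c)).hasFDerivAt.comp x h2
    exact (by simpa using this : HasFDerivAt (g ∘ fun y => y + c) (fderiv ℝ g (x + c)) x)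
  have h2 : (fun y => g (y + c)) = g := funext fun y => hper y k
  rw [h2] at h1
  exact h1.fderiv.symm

lemma fderiv_comp_proj {d : ℕ} {F : (Fin d → ℝ) → (Fin d → ℝ)} {x : Fin d → ℝ}
    (hF : DifferentiableAt ℝ F x) (i : Fin d) :
    fderiv ℝ (fun z => F z i) x = (ContinuousLinearMap.proj i).comp (fderiv ℝ F x) := by
  exact (((ContinuousLinearMap.proj (R := ℝ) (φ := fun _ : Fin d => ℝ) i).hasFDerivAt).comp x
    hF.hasFDerivAt).fderiv

lemma integral_diverg_eq_zero {n : ℕ} (F : (Fin (n+1) → ℝ) → (Fin (n+1) → ℝ))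
    (hF : ContDiff ℝ 1 F) (hper : ∀ i, ZdPeriodic fun x => F x i) :
    ∫ y in Set.Icc (0 : Fin (n+1) → ℝ) 1, diverg F y = 0 := by
  have hdF : Differentiable ℝ F := hF.differentiable one_ne_zero
  have hdiv : diverg F = fun x => ∑ i, fderiv ℝ F x (Pi.single i 1) i := by
    funext x
    unfold diverg
    refine Finset.sum_congr rfl fun i _ => ?_
    rw [fderiv_comp_proj (hdF x) i]; rfl
  have hcontf' : Continuous (fderiv ℝ F) := hF.continuous_fderiv one_ne_zero
  have hcont : Continuous fun x => ∑ i, fderiv ℝ F x (Pi.single i 1) i :=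
    continuous_finset_sum _ fun i _ =>
      (continuous_apply i).comp (hcontf'.clm_apply continuous_const)
  have hle : (0 : Fin (n+1) → ℝ) ≤ 1 := fun _ => zero_le_one
  have key := integral_divergence_of_hasFDerivAt_off_countable (a := 0) (b := 1) hle F
    (fun x => fderiv ℝ F x) ∅ Set.countable_empty hF.continuous.continuousOn
    (fun x _ => (hdF x).hasFDerivAt)
    (hcont.continuousOn.integrableOn_compact isCompact_Icc)
  rw [hdiv, key]
  refine Finset.sum_eq_zero fun i _ => ?_
  have hfeq : ∀ x : Fin n → ℝ,
      F (Fin.insertNth i ((1 : Fin (n+1) → ℝ) i) x) i = F (Fin.insertNth i ((0 : Fin (n+1) → ℝ) i) x) i := by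
    intro x
    have hx : Fin.insertNth i ((1:Fin (n+1) → ℝ) i) x =
        Fin.insertNth i ((0:Fin (n+1) → ℝ) i) x + fun j => (((Pi.single i 1 : Fin (n+1) → ℤ) j : ℤ) : ℝ) := by
      funext j
      refine Fin.succAboveCases i ?_ ?_ j
      · simp
      · intro m
        simp [Pi.single_eq_of_ne (Fin.succAbove_ne i m)]
    rw [hx]; exact hper i _ (Pi.single i 1)
  simp only [hfeq, sub_self]

end Stmt5Aux

namespace Stmt5Aux

lemma integral_partial_eq_zero {n : ℕ} (g : (Fin (n+1) → ℝ) → ℝ) (hg : ContDiff ℝ 1 g)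
    (hper : ZdPeriodic g) (k : Fin (n+1)) :
    ∫ y in Set.Icc (0 : Fin (n+1) → ℝ) 1, fderiv ℝ g y (Pi.single k 1) = 0 := by
  have hcomp : ∀ i : Fin (n+1), (fun y : Fin (n+1) → ℝ => (Pi.single k (g y) : Fin (n+1) → ℝ) i) =
      (fun y => if i = k then g y else 0) := by
    intro i; funext y; simp [Pi.single_apply]
  have hc1 : ContDiff ℝ 1 (fun y : Fin (n+1) → ℝ => (Pi.single k (g y) : Fin (n+1) → ℝ)) := by
    refine contDiff_pi.2 fun i => ?_
    rw [hcomp i]; split_ifs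
    · exact hg
    · exact contDiff_const
  have h := integral_diverg_eq_zero (fun y => Pi.single k (g y)) hc1
    (fun i x kk => by
      simp only [Pi.single_apply]
      split_ifs
      · exact hper x kk
      · rfl)
  have hdiv : ∀ y, diverg (fun y => Pi.single k (g y)) y = fderiv ℝ g y (Pi.single k 1) := by
    intro y
    unfold diverg
    rw [Finset.sum_eq_single k]
    · rw [hcomp k]; simp
    · intro i _ hik
      rw [hcomp i]
      simp [hik]
    · simp
  rw [← h]
  exact setIntegral_congr_fun measurableSet_Icc fun y _ => (hdiv y).symm

lemma diverg_smul {d : ℕ} (ψ : (Fin d → ℝ) → ℝ) (G : (Fin d → ℝ) → (Fin d → ℝ)) (y : Fin d → ℝ)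
    (hψ : DifferentiableAt ℝ ψ y) (hG : ∀ k, DifferentiableAt ℝ (fun x => G x k) y) :
    diverg (fun z => ψ z • G z) y =
      (∑ k, fderiv ℝ ψ y (Pi.single k 1) * G y k) + ψ y * diverg G y := by
  unfold diverg
  rw [Finset.mul_sum, ← Finset.sum_add_distrib]
  refine Finset.sum_congr rfl fun k _ => ?_
  have h1 : (fun z => (ψ z • G z) k) = fun z => ψ z * G z k := rfl
  rw [h1, fderiv_fun_mul hψ (hG k)]
  simp only [ContinuousLinearMap.add_apply, ContinuousLinearMap.smul_apply, smul_eq_mul]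
  ring

lemma integral_cauchy_schwarz {α : Type*} [MeasurableSpace α] (μ : Measure α) (f g : α → ℝ)
    (hff : Integrable (fun x => f x * f x) μ) (hfg : Integrable (fun x => f x * g x) μ)
    (hgg : Integrable (fun x => g x * g x) μ) :
    (∫ x, f x * g x ∂μ)^2 ≤ (∫ x, f x * f x ∂μ) * ∫ x, g x * g x ∂μ := by
  have key : ∀ t : ℝ, 0 ≤ (∫ x, f x * f x ∂μ) * (t * t) + (2 * ∫ x, f x * g x ∂μ) * t
      + ∫ x, g x * g x ∂μ := by
    intro t
    have h1 : 0 ≤ ∫ x, (t * f x + g x)^2 ∂μ := integral_nonneg fun x => sq_nonneg _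
    have h2 : ∫ x, (t * f x + g x)^2 ∂μ = (t*t) * ∫ x, f x * f x ∂μ
        + ((2*t) * ∫ x, f x * g x ∂μ + ∫ x, g x * g x ∂μ) := by
      have he : (fun x => (t * f x + g x)^2)
          = fun x => (t*t) * (f x * f x) + ((2*t) * (f x * g x) + g x * g x) :=
        funext fun x => by ring
      have i1 : Integrable (fun x => (2*t) * (f x * g x) + g x * g x) μ :=
        (hfg.const_mul _).add hgg
      rw [he, integral_add (hff.const_mul _) i1, integral_add (hfg.const_mul _) hgg,
        integral_const_mul, integral_const_mul]
    rw [h2] at h1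
    nlinarith [h1]
  have hd := discrim_le_zero key
  rw [discrim] at hd
  nlinarith [hd]

end Stmt5Aux

namespace Stmt5Aux

noncomputable def W {d : ℕ} (σ : ℝ) (V : (Fin d → ℝ) → ℝ) (z : Fin d → ℝ) : ℝ :=
  Real.exp (-V z / σ)

noncomputable def gi {d : ℕ} (θ : (Fin d → ℝ) → (Fin d → ℝ)) (i : Fin d) (z : Fin d → ℝ) :
    Fin d → ℝ := grad (fun x => θ x i) z + Pi.single i 1

noncomputable def Phi {d : ℕ} (θ : (Fin d → ℝ) → (Fin d → ℝ)) (v : Fin d → ℝ) (z : Fin d → ℝ) :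
    Fin d → ℝ := fun k => ∑ i, v i * gi θ i z k

variable {d : ℕ} {σ : ℝ} {V : (Fin d → ℝ) → ℝ} {θ : (Fin d → ℝ) → (Fin d → ℝ)}

lemma W_contDiff (hσ : 0 < σ) (hV : ContDiff ℝ (⊤ : ℕ∞) V) : ContDiff ℝ 1 (W σ V) :=
  (Real.contDiff_exp.comp ((hV.neg).div_const σ)).of_le (by simp)

lemma W_pos (z : Fin d → ℝ) : 0 < W σ V z := Real.exp_pos _

lemma W_per (hVper : ZdPeriodic V) : ZdPeriodic (W σ V) := fun x k => by
  unfold W; rw [hVper x k]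

lemma theta_comp_contDiff (hθ : ContDiff ℝ 2 θ) (i : Fin d) :
    ContDiff ℝ 2 fun x => θ x i := contDiff_pi.1 hθ i

lemma grad_comp_contDiff (hθ : ContDiff ℝ 2 θ) (i k : Fin d) :
    ContDiff ℝ 1 fun z => fderiv ℝ (fun x => θ x i) z (Pi.single k 1) :=
  ((theta_comp_contDiff hθ i).fderiv_right (by norm_num : (1:WithTop ℕ∞) + 1 ≤ 2)).clm_apply
    contDiff_const

lemma grad_comp_per (hθ : ContDiff ℝ 2 θ) (hθper : ∀ i, ZdPeriodic fun x => θ x i) (i k : Fin d) :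
    ZdPeriodic fun z => fderiv ℝ (fun x => θ x i) z (Pi.single k 1) := by
  intro x kk
  have hdiff : Differentiable ℝ fun x => θ x i :=
    (theta_comp_contDiff hθ i).differentiable (by norm_num)
  show (fderiv ℝ (fun x => θ x i) (x + fun i => ((kk i : ℤ) : ℝ))) (Pi.single k 1) = _
  rw [fderiv_shift hdiff (hθper i) x kk]

lemma gi_comp_contDiff (hθ : ContDiff ℝ 2 θ) (i k : Fin d) :
    ContDiff ℝ 1 fun z => gi θ i z k := by
  have : (fun z => gi θ i z k) =
      fun z => fderiv ℝ (fun x => θ x i) z (Pi.single k 1) + (Pi.single i 1 : Fin d → ℝ) k := rfl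
  rw [this]
  exact (grad_comp_contDiff hθ i k).add contDiff_const

lemma gi_comp_per (hθ : ContDiff ℝ 2 θ) (hθper : ∀ i, ZdPeriodic fun x => θ x i) (i k : Fin d) :
    ZdPeriodic fun z => gi θ i z k := by
  intro x kk
  show fderiv ℝ (fun x => θ x i) (x + fun i => ((kk i : ℤ) : ℝ)) (Pi.single k 1)
      + (Pi.single i 1 : Fin d → ℝ) k = _
  rw [show (fderiv ℝ (fun x => θ x i) (x + fun i => ((kk i : ℤ) : ℝ))) (Pi.single k 1)
      = fderiv ℝ (fun x => θ x i) x (Pi.single k 1) from grad_comp_per hθ hθper i k x kk]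
  rfl

lemma cont_integrableOn {d : ℕ} {f : (Fin d → ℝ) → ℝ} (hf : Continuous f) :
    IntegrableOn f (Set.Icc (0 : Fin d → ℝ) 1) :=
  hf.continuousOn.integrableOn_compact isCompact_Icc

lemma Phi_cont (hθ : ContDiff ℝ 2 θ) (v : Fin d → ℝ) (k : Fin d) :
    Continuous fun z => Phi θ v z k := by
  unfold Phi
  exact continuous_finset_sum _ fun i _ =>
    continuous_const.mul (gi_comp_contDiff hθ i k).continuous

lemma Phi_eq (v : Fin d → ℝ) (y : Fin d → ℝ) (k : Fin d) :
    Phi θ v y k = v k + ∑ j, v j * fderiv ℝ (fun x => θ x j) y (Pi.single k 1) := by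
  unfold Phi gi
  have : ∀ i : Fin d, v i * ((grad (fun x => θ x i) y + Pi.single i 1 : Fin d → ℝ) k)
      = v i * fderiv ℝ (fun x => θ x i) y (Pi.single k 1)
        + v i * ((Pi.single i 1 : Fin d → ℝ) k) := by
    intro i
    show v i * (fderiv ℝ (fun x => θ x i) y (Pi.single k 1) + (Pi.single i 1 : Fin d → ℝ) k) = _
    ring
  rw [Finset.sum_congr rfl fun i _ => this i, Finset.sum_add_distrib]
  have h2 : ∑ i, v i * ((Pi.single i 1 : Fin d → ℝ) k) = v k := by
    rw [Finset.sum_eq_single k] <;> simp +contextual [Pi.single_apply]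
  rw [h2]; ring

end Stmt5Aux

namespace Stmt5Aux

variable {n : ℕ} {σ : ℝ} {V : (Fin (n+1) → ℝ) → ℝ} {θ : (Fin (n+1) → ℝ) → (Fin (n+1) → ℝ)}

lemma key1 (hσ : 0 < σ) (hV : ContDiff ℝ (⊤ : ℕ∞) V) (hVper : ZdPeriodic V)
    (hθ : ContDiff ℝ 2 θ) (hθper : ∀ i, ZdPeriodic fun x => θ x i)
    (hcorr : ∀ (y : Fin (n+1) → ℝ) (i : Fin (n+1)),
      diverg (fun z => Real.exp (-V z / σ) • (grad (fun x => θ x i) z + Pi.single i 1)) y = 0)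
    (i j : Fin (n+1)) :
    ∫ y in Set.Icc (0 : Fin (n+1) → ℝ) 1,
      W σ V y * (∑ k, fderiv ℝ (fun x => θ x j) y (Pi.single k 1) * gi θ i y k) = 0 := by
  -- the periodic vector field θ_j • (W • g_i)
  set F : (Fin (n+1) → ℝ) → (Fin (n+1) → ℝ) :=
    fun z => θ z j • (W σ V z • gi θ i z) with hF
  have hθj : ContDiff ℝ 1 fun x => θ x j := (theta_comp_contDiff hθ j).of_le (by norm_num)
  have hWc := W_contDiff hσ hV
  have hFk : ∀ k, (fun z => F z k) = fun z => θ z j * (W σ V z * gi θ i z k) := fun k => rfl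
  have hFc : ContDiff ℝ 1 F := by
    refine contDiff_pi.2 fun k => ?_
    rw [hFk k]
    exact hθj.mul (hWc.mul (gi_comp_contDiff hθ i k))
  have hFper : ∀ k, ZdPeriodic fun z => F z k := by
    intro k x kk
    rw [hFk k]
    simp only
    have h1 : θ (x + fun i => ((kk i : ℤ) : ℝ)) j = θ x j := hθper j x kk
    have h2 : W σ V (x + fun i => ((kk i : ℤ) : ℝ)) = W σ V x := W_per hVper x kk
    have h3 : gi θ i (x + fun i => ((kk i : ℤ) : ℝ)) k = gi θ i x k := gi_comp_per hθ hθper i k x kk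
    rw [h1, h2, h3]
  have h0 := integral_diverg_eq_zero F hFc hFper
  have hdiv_pt : ∀ y, diverg F y
      = ∑ k, fderiv ℝ (fun x => θ x j) y (Pi.single k 1) * (W σ V y * gi θ i y k) := by
    intro y
    have hψ : DifferentiableAt ℝ (fun x => θ x j) y :=
      (hθj.differentiable one_ne_zero) y
    have hG : ∀ k, DifferentiableAt ℝ (fun x => (W σ V x • gi θ i x : Fin (n+1) → ℝ) k) y := by
      intro k
      exact ((hWc.mul (gi_comp_contDiff hθ i k)).differentiable one_ne_zero) y
    have := diverg_smul (fun z => θ z j) (fun z => W σ V z • gi θ i z) y hψ hG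
    rw [hF, this]
    have hz : diverg (fun z => W σ V z • gi θ i z) y = 0 := hcorr y i
    rw [hz, mul_zero, add_zero]
    rfl
  have hintegrand : ∀ y, W σ V y * (∑ k, fderiv ℝ (fun x => θ x j) y (Pi.single k 1) * gi θ i y k)
      = diverg F y := by
    intro y
    rw [hdiv_pt y, Finset.mul_sum]
    exact Finset.sum_congr rfl fun k _ => by ring
  rw [← h0]
  exact setIntegral_congr_fun measurableSet_Icc fun y _ => hintegrand y

end Stmt5Aux

namespace Stmt5Aux

variable {n : ℕ} {σ : ℝ} {V : (Fin (n+1) → ℝ) → ℝ} {θ : (Fin (n+1) → ℝ) → (Fin (n+1) → ℝ)}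

lemma entry_eq {d : ℕ} (y : Fin d → ℝ) (i j : Fin d) (θ : (Fin d → ℝ) → (Fin d → ℝ)) :
    (1 + jacobian θ y) i j = gi θ i y j := by
  show (1 : Matrix (Fin d) (Fin d) ℝ) i j + jacobian θ y i j
      = fderiv ℝ (fun x => θ x i) y (Pi.single j 1) + (Pi.single i 1 : Fin d → ℝ) j
  rcases eq_or_ne i j with rfl | hij
  · simp [Matrix.one_apply, jacobian, add_comm]
  · simp [Matrix.one_apply, hij, jacobian, Pi.single_apply, Ne.symm hij]

lemma hM (hσ : 0 < σ) (i j : Fin (n+1)) :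
    effTensor (n+1) σ V θ i j
      = ∫ y in Set.Icc (0 : Fin (n+1) → ℝ) 1, W σ V y * gi θ i y j := by
  show (∫ y in Set.Icc (0 : Fin (n+1) → ℝ) 1,
      Real.exp (-V y / σ) * ((1 + jacobian θ y) i j)) = _
  exact setIntegral_congr_fun measurableSet_Icc fun y _ => by rw [entry_eq y i j θ]; rfl

lemma quad_repr (hσ : 0 < σ) (hV : ContDiff ℝ (⊤ : ℕ∞) V) (hθ : ContDiff ℝ 2 θ) (v : Fin (n+1) → ℝ) :
    v ⬝ᵥ (effTensor (n+1) σ V θ).mulVec v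
      = ∫ y in Set.Icc (0 : Fin (n+1) → ℝ) 1, W σ V y * (v ⬝ᵥ Phi θ v y) := by
  have hWcont : Continuous (W σ V) := (W_contDiff hσ hV).continuous
  have hint : ∀ i k : Fin (n+1),
      IntegrableOn (fun y => v k * v i * (W σ V y * gi θ i y k))
        (Set.Icc (0 : Fin (n+1) → ℝ) 1) :=
    fun i k => cont_integrableOn
      (continuous_const.mul (hWcont.mul (gi_comp_contDiff hθ i k).continuous))
  have hpt : ∀ y, W σ V y * (v ⬝ᵥ Phi θ v y)
      = ∑ k, ∑ i, v k * v i * (W σ V y * gi θ i y k) := by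
    intro y
    simp only [dotProduct, Phi, Finset.mul_sum]
    exact Finset.sum_congr rfl fun k _ => Finset.sum_congr rfl fun i _ => by ring
  rw [setIntegral_congr_fun measurableSet_Icc fun y _ => hpt y]
  rw [integral_finset_sum _ fun k _ => (integrable_finset_sum _ fun i _ => hint i k)]
  have : ∀ k : Fin (n+1), (∫ y in Set.Icc (0 : Fin (n+1) → ℝ) 1,
      ∑ i, v k * v i * (W σ V y * gi θ i y k))
      = ∑ i, v k * v i * (∫ y in Set.Icc (0 : Fin (n+1) → ℝ) 1, W σ V y * gi θ i y k) := by
    intro k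
    rw [integral_finset_sum _ fun i _ => hint i k]
    exact Finset.sum_congr rfl fun i _ => integral_const_mul _ _
  rw [Finset.sum_congr rfl fun k _ => this k]
  simp only [dotProduct, Matrix.mulVec, Finset.mul_sum]
  rw [Finset.sum_comm]
  refine Finset.sum_congr rfl fun i _ => Finset.sum_congr rfl fun k _ => ?_
  rw [hM hσ k i]
  ring

end Stmt5Aux

namespace Stmt5Aux

variable {n : ℕ} {σ : ℝ} {V : (Fin (n+1) → ℝ) → ℝ} {θ : (Fin (n+1) → ℝ) → (Fin (n+1) → ℝ)}

lemma hkeyv (hσ : 0 < σ) (hV : ContDiff ℝ (⊤ : ℕ∞) V) (hVper : ZdPeriodic V)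
    (hθ : ContDiff ℝ 2 θ) (hθper : ∀ i, ZdPeriodic fun x => θ x i)
    (hcorr : ∀ (y : Fin (n+1) → ℝ) (i : Fin (n+1)),
      diverg (fun z => Real.exp (-V z / σ) • (grad (fun x => θ x i) z + Pi.single i 1)) y = 0)
    (v : Fin (n+1) → ℝ) (j : Fin (n+1)) :
    ∫ y in Set.Icc (0 : Fin (n+1) → ℝ) 1,
      W σ V y * (∑ k, fderiv ℝ (fun x => θ x j) y (Pi.single k 1) * Phi θ v y k) = 0 := by
  have hWcont : Continuous (W σ V) := (W_contDiff hσ hV).continuous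
  have hpt : ∀ y, W σ V y * (∑ k, fderiv ℝ (fun x => θ x j) y (Pi.single k 1) * Phi θ v y k)
      = ∑ i, v i * (W σ V y * (∑ k, fderiv ℝ (fun x => θ x j) y (Pi.single k 1) * gi θ i y k)) := by
    intro y
    simp only [Phi, Finset.mul_sum, Finset.sum_mul]
    rw [Finset.sum_comm]
    exact Finset.sum_congr rfl fun i _ => Finset.sum_congr rfl fun k _ => by ring
  have hintik : ∀ i : Fin (n+1), IntegrableOn
      (fun y => v i * (W σ V y * (∑ k, fderiv ℝ (fun x => θ x j) y (Pi.single k 1) * gi θ i y k)))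
      (Set.Icc (0 : Fin (n+1) → ℝ) 1) := by
    intro i
    refine cont_integrableOn (continuous_const.mul (hWcont.mul ?_))
    exact continuous_finset_sum _ fun k _ =>
      (grad_comp_contDiff hθ j k).continuous.mul (gi_comp_contDiff hθ i k).continuous
  rw [setIntegral_congr_fun measurableSet_Icc fun y _ => hpt y,
    integral_finset_sum _ fun i _ => hintik i]
  refine Finset.sum_eq_zero fun i _ => ?_
  rw [integral_const_mul, key1 hσ hV hVper hθ hθper hcorr i j, mul_zero]

lemma repr2 (hσ : 0 < σ) (hV : ContDiff ℝ (⊤ : ℕ∞) V) (hVper : ZdPeriodic V)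
    (hθ : ContDiff ℝ 2 θ) (hθper : ∀ i, ZdPeriodic fun x => θ x i)
    (hcorr : ∀ (y : Fin (n+1) → ℝ) (i : Fin (n+1)),
      diverg (fun z => Real.exp (-V z / σ) • (grad (fun x => θ x i) z + Pi.single i 1)) y = 0)
    (v : Fin (n+1) → ℝ) :
    ∫ y in Set.Icc (0 : Fin (n+1) → ℝ) 1, W σ V y * (Phi θ v y ⬝ᵥ Phi θ v y)
      = ∫ y in Set.Icc (0 : Fin (n+1) → ℝ) 1, W σ V y * (v ⬝ᵥ Phi θ v y) := by
  have hWcont : Continuous (W σ V) := (W_contDiff hσ hV).continuous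
  have hΦc : ∀ k, Continuous fun y => Phi θ v y k := Phi_cont hθ v
  have hpt : ∀ y, W σ V y * (Phi θ v y ⬝ᵥ Phi θ v y)
      = W σ V y * (v ⬝ᵥ Phi θ v y)
        + ∑ j, v j * (W σ V y * (∑ k, fderiv ℝ (fun x => θ x j) y (Pi.single k 1) * Phi θ v y k)) := by
    intro y
    have hterm : ∀ k, Phi θ v y k * Phi θ v y k
        = v k * Phi θ v y k
          + ∑ j, v j * (fderiv ℝ (fun x => θ x j) y (Pi.single k 1) * Phi θ v y k) := by
      intro k
      nth_rewrite 1 [Phi_eq v y k]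
      rw [add_mul, Finset.sum_mul]
      congr 1
      exact Finset.sum_congr rfl fun j _ => by ring
    have e1 : Phi θ v y ⬝ᵥ Phi θ v y
        = (v ⬝ᵥ Phi θ v y)
          + ∑ j, v j * (∑ k, fderiv ℝ (fun x => θ x j) y (Pi.single k 1) * Phi θ v y k) := by
      simp only [dotProduct]
      rw [Finset.sum_congr rfl fun k _ => hterm k, Finset.sum_add_distrib]
      congr 1
      rw [Finset.sum_comm]
      exact Finset.sum_congr rfl fun j _ => by rw [Finset.mul_sum]
    rw [e1, mul_add, Finset.mul_sum]
    congr 1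
    exact Finset.sum_congr rfl fun j _ => by ring
  have hint1 : IntegrableOn (fun y => W σ V y * (v ⬝ᵥ Phi θ v y))
      (Set.Icc (0 : Fin (n+1) → ℝ) 1) := by
    refine cont_integrableOn (hWcont.mul ?_)
    exact continuous_finset_sum _ fun k _ => continuous_const.mul (hΦc k)
  have hint2 : ∀ j : Fin (n+1), IntegrableOn
      (fun y => v j * (W σ V y * (∑ k, fderiv ℝ (fun x => θ x j) y (Pi.single k 1) * Phi θ v y k)))
      (Set.Icc (0 : Fin (n+1) → ℝ) 1) := by
    intro j
    refine cont_integrableOn (continuous_const.mul (hWcont.mul ?_))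
    exact continuous_finset_sum _ fun k _ => (grad_comp_contDiff hθ j k).continuous.mul (hΦc k)
  rw [setIntegral_congr_fun measurableSet_Icc fun y _ => hpt y,
    integral_add hint1 (integrable_finset_sum _ fun j _ => hint2 j),
    integral_finset_sum _ fun j _ => hint2 j]
  have : ∀ j : Fin (n+1), (∫ y in Set.Icc (0 : Fin (n+1) → ℝ) 1,
      v j * (W σ V y * (∑ k, fderiv ℝ (fun x => θ x j) y (Pi.single k 1) * Phi θ v y k))) = 0 := by
    intro j
    rw [integral_const_mul, hkeyv hσ hV hVper hθ hθper hcorr v j, mul_zero]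
  rw [Finset.sum_congr rfl fun j _ => this j]
  simp

lemma intPhi (hθ : ContDiff ℝ 2 θ) (hθper : ∀ i, ZdPeriodic fun x => θ x i)
    (v : Fin (n+1) → ℝ) :
    ∫ y in Set.Icc (0 : Fin (n+1) → ℝ) 1, (v ⬝ᵥ Phi θ v y) = v ⬝ᵥ v := by
  have hpt : ∀ y, v ⬝ᵥ Phi θ v y
      = v ⬝ᵥ v + ∑ k, ∑ j, v k * v j * fderiv ℝ (fun x => θ x j) y (Pi.single k 1) := by
    intro y
    simp only [dotProduct]
    rw [← Finset.sum_add_distrib]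
    refine Finset.sum_congr rfl fun k _ => ?_
    rw [Phi_eq v y k, mul_add, Finset.mul_sum]
    congr 1
    exact Finset.sum_congr rfl fun j _ => by ring
  have hintkj : ∀ k j : Fin (n+1), IntegrableOn
      (fun y => v k * v j * fderiv ℝ (fun x => θ x j) y (Pi.single k 1))
      (Set.Icc (0 : Fin (n+1) → ℝ) 1) :=
    fun k j => cont_integrableOn (continuous_const.mul (grad_comp_contDiff hθ j k).continuous)
  have hvol1 : volume (Set.Icc (0 : Fin (n+1) → ℝ) 1) = 1 := by
    rw [Real.volume_Icc_pi]
    simp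
  have hvol : (volume (Set.Icc (0 : Fin (n+1) → ℝ) 1)).toReal = 1 := by
    rw [hvol1]; simp
  rw [setIntegral_congr_fun measurableSet_Icc fun y _ => hpt y,
    integral_add (μ := volume.restrict (Set.Icc (0 : Fin (n+1) → ℝ) 1)) (show IntegrableOn (fun _ => v ⬝ᵥ v) (Set.Icc (0 : Fin (n+1) → ℝ) 1) volume from
      integrableOn_const (by rw [hvol1]; exact ENNReal.one_ne_top))
      (integrable_finset_sum _ fun k _ => integrable_finset_sum _ fun j _ => hintkj k j),
    setIntegral_const, measureReal_def, hvol, one_smul]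
  have hz : ∀ k j : Fin (n+1), (∫ y in Set.Icc (0 : Fin (n+1) → ℝ) 1,
      v k * v j * fderiv ℝ (fun x => θ x j) y (Pi.single k 1)) = 0 := by
    intro k j
    rw [integral_const_mul,
      integral_partial_eq_zero (fun x => θ x j)
        ((theta_comp_contDiff hθ j).of_le (by norm_num)) (hθper j) k, mul_zero]
  rw [integral_finset_sum _ fun k _ => integrable_finset_sum _ fun j _ => hintkj k j]
  rw [Finset.sum_congr rfl fun k _ => integral_finset_sum _ fun j _ => hintkj k j]
  rw [Finset.sum_congr rfl fun k _ => Finset.sum_congr rfl fun j _ => hz k j]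
  simp

end Stmt5Aux


open Stmt5Aux

/-- Uniform ellipticity of the intermediary effective tensor: if the
components of a `C²` `ℤ^d`-periodic `θ` solve the corrector equations
`∇·(e^{-V/σ}(∇θ_i + e_i)) = 0`, then `K = ∫ (I + Dθ) e^{-V/σ}` satisfies
`v·Kv ≥ |v|² / ∫_{[0,1]^d} e^{V/σ}` for all `v`; in particular `K` is positive definite. -/
theorem stmt5 (d : ℕ) (hd : 1 ≤ d) (σ : ℝ) (hσ : 0 < σ)
    (V : (Fin d → ℝ) → ℝ) (hVsmooth : ContDiff ℝ (⊤ : ℕ∞) V) (hVper : ZdPeriodic V)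
    (θ : (Fin d → ℝ) → (Fin d → ℝ)) (hθ : ContDiff ℝ 2 θ)
    (hθper : ∀ i, ZdPeriodic fun x => θ x i)
    (hcorr : ∀ (y : Fin d → ℝ) (i : Fin d),
      diverg (fun z => Real.exp (-V z / σ) • (grad (fun x => θ x i) z + Pi.single i 1)) y = 0) :
    (∀ v : Fin d → ℝ,
      (v ⬝ᵥ v) / (∫ y in Set.Icc (0 : Fin d → ℝ) 1, Real.exp (V y / σ)) ≤
        v ⬝ᵥ (effTensor d σ V θ).mulVec v) ∧
    (∀ v : Fin d → ℝ, v ≠ 0 → 0 < v ⬝ᵥ (effTensor d σ V θ).mulVec v) := by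
  obtain ⟨n, rfl⟩ : ∃ n, d = n + 1 := ⟨d - 1, by omega⟩
  have hσ' : σ ≠ 0 := ne_of_gt hσ
  have hWcont : Continuous (W σ V) := (W_contDiff hσ hVsmooth).continuous
  have hΦc : ∀ (v : Fin (n+1) → ℝ) k, Continuous fun y => Phi θ v y k := fun v => Phi_cont hθ v
  have hVc : Continuous V := hVsmooth.continuous
  have hvol1 : volume (Set.Icc (0 : Fin (n+1) → ℝ) 1) = 1 := by
    rw [Real.volume_Icc_pi]; simp
  set I : ℝ := ∫ y in Set.Icc (0 : Fin (n+1) → ℝ) 1, Real.exp (V y / σ) with hI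
  have hexpc : Continuous fun y : Fin (n+1) → ℝ => Real.exp (V y / σ) :=
    Real.continuous_exp.comp (hVc.div_const σ)
  have hIpos : 0 < I := by
    rw [hI, setIntegral_pos_iff_support_of_nonneg_ae
      (Filter.Eventually.of_forall fun y => (Real.exp_pos _).le)
      (cont_integrableOn hexpc)]
    have hsupp : (Function.support fun y : Fin (n+1) → ℝ => Real.exp (V y / σ)) = Set.univ :=
      Set.eq_univ_of_forall fun y => (Real.exp_pos _).ne'
    rw [hsupp, Set.univ_inter, hvol1]
    exact zero_lt_one
  have hQ : ∀ v : Fin (n+1) → ℝ, v ⬝ᵥ (effTensor (n+1) σ V θ).mulVec v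
      = ∫ y in Set.Icc (0 : Fin (n+1) → ℝ) 1, W σ V y * (Phi θ v y ⬝ᵥ Phi θ v y) := by
    intro v
    rw [quad_repr hσ hVsmooth hθ v, ← repr2 hσ hVsmooth hVper hθ hθper hcorr v]
  have hQnonneg : ∀ v : Fin (n+1) → ℝ, 0 ≤ v ⬝ᵥ (effTensor (n+1) σ V θ).mulVec v := by
    intro v
    rw [hQ v]
    refine setIntegral_nonneg measurableSet_Icc fun y _ => ?_
    exact mul_nonneg (W_pos y).le (Finset.sum_nonneg fun k _ => mul_self_nonneg _)
  have hCS : ∀ v : Fin (n+1) → ℝ,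
      (v ⬝ᵥ v)^2 ≤ ((v ⬝ᵥ v) * (v ⬝ᵥ (effTensor (n+1) σ V θ).mulVec v)) * I := by
    intro v
    set f : (Fin (n+1) → ℝ) → ℝ := fun y => Real.exp (-V y / (2*σ)) * (v ⬝ᵥ Phi θ v y) with hf
    set g : (Fin (n+1) → ℝ) → ℝ := fun y => Real.exp (V y / (2*σ)) with hg
    have hfg : ∀ y, f y * g y = v ⬝ᵥ Phi θ v y := by
      intro y
      have h0 : Real.exp (-V y/(2*σ)) * Real.exp (V y/(2*σ)) = 1 := by
        rw [← Real.exp_add, show (-V y/(2*σ) + V y/(2*σ)) = 0 by ring, Real.exp_zero]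
      have h2 : f y * g y
          = (v ⬝ᵥ Phi θ v y) * (Real.exp (-V y/(2*σ)) * Real.exp (V y/(2*σ))) := by
        rw [hf, hg]; ring
      rw [h2, h0, mul_one]
    have hff : ∀ y, f y * f y = W σ V y * ((v ⬝ᵥ Phi θ v y) * (v ⬝ᵥ Phi θ v y)) := by
      intro y
      have h1 : Real.exp (-V y/(2*σ)) * Real.exp (-V y/(2*σ)) = Real.exp (-V y / σ) := by
        rw [← Real.exp_add]; congr 1; field_simp; ring
      have h2 : f y * f y = (Real.exp (-V y/(2*σ)) * Real.exp (-V y/(2*σ)))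
          * ((v ⬝ᵥ Phi θ v y) * (v ⬝ᵥ Phi θ v y)) := by rw [hf]; ring
      rw [h2, h1]; rfl
    have hgg : ∀ y, g y * g y = Real.exp (V y / σ) := by
      intro y
      rw [hg, ← Real.exp_add]; congr 1; field_simp; ring
    have hvΦcont : Continuous fun y => v ⬝ᵥ Phi θ v y :=
      continuous_finset_sum _ fun k _ => continuous_const.mul (hΦc v k)
    have hfc : Continuous f := (Real.continuous_exp.comp ((hVc.neg).div_const _)).mul hvΦcont
    have hgc : Continuous g := Real.continuous_exp.comp (hVc.div_const _)
    have hCSint := integral_cauchy_schwarz (volume.restrict (Set.Icc (0 : Fin (n+1) → ℝ) 1)) f g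
      (cont_integrableOn (hfc.mul hfc)) (cont_integrableOn (hfc.mul hgc))
      (cont_integrableOn (hgc.mul hgc))
    rw [setIntegral_congr_fun measurableSet_Icc fun y (_ : y ∈ _) => hfg y,
      setIntegral_congr_fun measurableSet_Icc fun y (_ : y ∈ _) => hff y,
      setIntegral_congr_fun measurableSet_Icc fun y (_ : y ∈ _) => hgg y,
      intPhi hθ hθper v, ← hI] at hCSint
    have hmono : (∫ y in Set.Icc (0 : Fin (n+1) → ℝ) 1,
        W σ V y * ((v ⬝ᵥ Phi θ v y) * (v ⬝ᵥ Phi θ v y)))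
        ≤ (v ⬝ᵥ v) * (v ⬝ᵥ (effTensor (n+1) σ V θ).mulVec v) := by
      rw [hQ v, ← integral_const_mul]
      refine setIntegral_mono_on
        (cont_integrableOn (hWcont.mul (hvΦcont.mul hvΦcont)))
        (cont_integrableOn (continuous_const.mul (hWcont.mul (continuous_finset_sum _ fun k _ =>
          (hΦc v k).mul (hΦc v k)))))
        measurableSet_Icc (fun y _ => ?_)
      have hcs := Finset.sum_mul_sq_le_sq_mul_sq Finset.univ v (Phi θ v y)
      have h1 : (v ⬝ᵥ Phi θ v y) * (v ⬝ᵥ Phi θ v y) ≤ (v ⬝ᵥ v) * (Phi θ v y ⬝ᵥ Phi θ v y) := by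
        simp only [dotProduct]
        calc (∑ k, v k * Phi θ v y k) * (∑ k, v k * Phi θ v y k)
            = (∑ k, v k * Phi θ v y k)^2 := by ring
          _ ≤ (∑ k, v k ^2) * (∑ k, Phi θ v y k ^2) := hcs
          _ = (∑ k, v k * v k) * (∑ k, Phi θ v y k * Phi θ v y k) := by
              congr 1 <;> exact Finset.sum_congr rfl fun k _ => by ring
      have hw := W_pos (σ := σ) (V := V) y
      nlinarith [hw, h1]
    calc (v ⬝ᵥ v)^2 ≤ (∫ y in Set.Icc (0 : Fin (n+1) → ℝ) 1,
          W σ V y * ((v ⬝ᵥ Phi θ v y) * (v ⬝ᵥ Phi θ v y))) * I := hCSint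
      _ ≤ ((v ⬝ᵥ v) * (v ⬝ᵥ (effTensor (n+1) σ V θ).mulVec v)) * I :=
          mul_le_mul_of_nonneg_right hmono hIpos.le
  have hvvnonneg : ∀ v : Fin (n+1) → ℝ, 0 ≤ v ⬝ᵥ v := fun v =>
    Finset.sum_nonneg fun k _ => mul_self_nonneg _
  have hmain : ∀ v : Fin (n+1) → ℝ,
      (v ⬝ᵥ v) / I ≤ v ⬝ᵥ (effTensor (n+1) σ V θ).mulVec v := by
    intro v
    rcases eq_or_lt_of_le (hvvnonneg v) with h0 | hpos
    · rw [← h0, zero_div]; exact hQnonneg v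
    · rw [div_le_iff₀ hIpos]
      nlinarith [hCS v, hpos]
  refine ⟨hmain, fun v hv => ?_⟩
  have hvv : 0 < v ⬝ᵥ v := by
    obtain ⟨i, hvi⟩ : ∃ i, v i ≠ 0 := by
      by_contra h; push_neg at h; exact hv (funext h)
    exact Finset.sum_pos' (fun k _ => mul_self_nonneg _)
      ⟨i, Finset.mem_univ i, mul_self_pos.2 hvi⟩
  exact lt_of_lt_of_le (div_pos hvv hIpos) (hmain v)
end

section
/- Fix ε > 0, σ > 0 and α with 0 < α < 1, and let V(x) = x²(1 + α cos(2πx/ε)) for x ∈ ℝ. For r > 0 define B₊(r) = (∫_r^∞ e^{-V(x)/σ} dx)^{1/2} · (∫_0^r e^{V(x)/σ} dx)^{1/2}. Then sup_{r > 0} B₊(r) = +∞; in fact B₊(ε(2πn + π/2)) → ∞ as n → ∞ through the integers. -/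
/-!
On every period of length `ε` the cosine in `V` is `≤ -1/2` on one window of length `ε/3` and
`≥ 1/2` on another. Hence `∫_r^∞ e^{-V/σ} ≥ (ε/3) e^{-(1-α/2)(r+3ε)²/σ}` and
`∫_0^r e^{V/σ} ≥ (ε/3) e^{(1+α/2)(r-4ε)²/σ}`, and the product of these bounds is `(ε/3)² e^{q(r)/σ}`
for a quadratic `q` with leading coefficient `α > 0`, so `B₊(r) → ∞` as `r → ∞`.
-/

open MeasureTheory Filter Real Set

noncomputable def multiscalePotential (ε α x : ℝ) : ℝ := x ^ 2 * (1 + α * cos (2 * π * x / ε))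

lemma half_le_cos_of_abs_sub_int_mul_two_pi_le {θ : ℝ} (m : ℤ) (h : |θ - m * (2 * π)| ≤ π / 3) :
    1 / 2 ≤ cos θ := by
  rw [← cos_sub_int_mul_two_pi θ m, ← cos_abs, ← cos_pi_div_three]
  exact cos_le_cos_of_nonneg_of_le_pi (abs_nonneg _) (by linarith [pi_pos]) h

lemma half_le_cos_two_pi_mul_div {ε x : ℝ} (hε : 0 < ε) (m : ℤ) (hx : |x - ε * m| ≤ ε / 6) :
    1 / 2 ≤ cos (2 * π * x / ε) := by
  apply half_le_cos_of_abs_sub_int_mul_two_pi_le m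
  have h : 2 * π * x / ε - m * (2 * π) = 2 * π / ε * (x - ε * m) := by field_simp
  rw [h, abs_mul, abs_of_pos (by positivity)]
  calc 2 * π / ε * |x - ε * m| ≤ 2 * π / ε * (ε / 6) := by gcongr
    _ = π / 3 := by field_simp; norm_num

lemma cos_two_pi_mul_div_le_neg_half {ε x : ℝ} (hε : 0 < ε) (k : ℤ)
    (hx : |x - ε * (k + 1 / 2)| ≤ ε / 6) : cos (2 * π * x / ε) ≤ -1 / 2 := by
  have h := half_le_cos_two_pi_mul_div hε (k + 1) (x := x + ε / 2)
    (by push_cast; convert hx using 2; ring)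
  have hshift : 2 * π * (x + ε / 2) / ε = 2 * π * x / ε + π := by field_simp
  rw [hshift, cos_add_pi] at h
  linarith

lemma exists_Icc_subset_Ioo_forall_cos_le_neg_half {ε : ℝ} (hε : 0 < ε) (t : ℝ) :
    ∃ a, Icc a (a + ε / 3) ⊆ Ioo t (t + 3 * ε) ∧
      ∀ x ∈ Icc a (a + ε / 3), cos (2 * π * x / ε) ≤ -1 / 2 := by
  obtain ⟨k, ⟨hk₁, hk₂⟩, -⟩ := existsUnique_add_zsmul_mem_Ico hε 0 t
  rw [zero_add, zsmul_eq_mul] at hk₁ hk₂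
  refine ⟨k * ε + ε / 3, fun x hx => ⟨by linarith [hx.1], by linarith [hx.2]⟩,
    fun x hx => cos_two_pi_mul_div_le_neg_half hε k ?_⟩
  rw [abs_le]
  constructor <;> linarith [hx.1, hx.2]

lemma exists_Icc_subset_Ioo_forall_half_le_cos {ε : ℝ} (hε : 0 < ε) (t : ℝ) :
    ∃ a, Icc a (a + ε / 3) ⊆ Ioo t (t + 3 * ε) ∧
      ∀ x ∈ Icc a (a + ε / 3), 1 / 2 ≤ cos (2 * π * x / ε) := by
  obtain ⟨k, ⟨hk₁, hk₂⟩, -⟩ := existsUnique_add_zsmul_mem_Ico hε 0 t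
  rw [zero_add, zsmul_eq_mul] at hk₁ hk₂
  refine ⟨(k + 1) * ε - ε / 6, fun x hx => ⟨by linarith [hx.1], by linarith [hx.2]⟩,
    fun x hx => half_le_cos_two_pi_mul_div hε (k + 1) ?_⟩
  rw [abs_le]
  push_cast
  constructor <;> linarith [hx.1, hx.2]

lemma mul_le_setIntegral_of_Icc_subset {f : ℝ → ℝ} {s : Set ℝ} {a b c : ℝ} (hab : a ≤ b)
    (hsub : Icc a b ⊆ s) (hf : IntegrableOn f s) (hf0 : 0 ≤ᵐ[volume.restrict s] f)
    (hc : ∀ x ∈ Icc a b, c ≤ f x) : c * (b - a) ≤ ∫ x in s, f x := calc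
  c * (b - a) = c * volume.real (Icc a b) := by rw [Real.volume_real_Icc_of_le hab]
  _ ≤ ∫ x in Icc a b, f x :=
    setIntegral_ge_of_const_le_real measurableSet_Icc (by simp) hc (hf.mono_set hsub)
  _ ≤ ∫ x in s, f x := setIntegral_mono_set hf hf0 hsub.eventuallyLE

lemma tendsto_quadratic_atTop {a : ℝ} (ha : 0 < a) (b c : ℝ) :
    Tendsto (fun x : ℝ => a * x ^ 2 + b * x + c) atTop atTop := by
  have h : Tendsto (fun x : ℝ => x * (a * x + b)) atTop atTop :=
    tendsto_id.atTop_mul_atTop₀ (tendsto_atTop_add_const_right _ b (tendsto_id.const_mul_atTop ha))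
  exact tendsto_atTop_add_const_right _ c (h.congr fun x => by ring)

section multiscalePotential

variable {ε σ α : ℝ}

lemma integrable_exp_neg_multiscalePotential_div (hσ : 0 < σ) (hα₀ : 0 ≤ α) (hα₁ : α < 1) :
    Integrable fun x => exp (-multiscalePotential ε α x / σ) := by
  refine (integrable_exp_neg_mul_sq (div_pos (sub_pos.2 hα₁) hσ)).mono
    (by unfold multiscalePotential; fun_prop) (ae_of_all _ fun x => ?_)
  have hV : (1 - α) * x ^ 2 ≤ multiscalePotential ε α x := by
    unfold multiscalePotential
    nlinarith [neg_one_le_cos (2 * π * x / ε), mul_nonneg hα₀ (sq_nonneg x)]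
  rw [norm_of_nonneg (exp_pos _).le, norm_of_nonneg (exp_pos _).le, exp_le_exp,
    neg_div, neg_mul, div_mul_eq_mul_div, neg_le_neg_iff]
  gcongr

lemma mul_exp_le_integral_Ioi_exp_neg_multiscalePotential (hε : 0 < ε) (hσ : 0 < σ)
    (hα₀ : 0 ≤ α) (hα₁ : α < 1) {r : ℝ} (hr : 0 ≤ r) :
    exp (-((1 - α / 2) * (r + 3 * ε) ^ 2) / σ) * (ε / 3) ≤
      ∫ x in Ioi r, exp (-multiscalePotential ε α x / σ) := by
  obtain ⟨a, hsub, hcos⟩ := exists_Icc_subset_Ioo_forall_cos_le_neg_half hε r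
  calc _ = exp (-((1 - α / 2) * (r + 3 * ε) ^ 2) / σ) * (a + ε / 3 - a) := by ring
    _ ≤ _ := mul_le_setIntegral_of_Icc_subset (by linarith) (hsub.trans Ioo_subset_Ioi_self)
      (integrable_exp_neg_multiscalePotential_div hσ hα₀ hα₁).integrableOn
      (ae_of_all _ fun x => (exp_pos _).le) fun x hx => ?_
  obtain ⟨hx₀, hx₁⟩ := hsub hx
  have hc := hcos x hx
  rw [exp_le_exp, div_le_div_iff_of_pos_right hσ, neg_le_neg_iff, multiscalePotential, mul_comm]
  gcongr
  · nlinarith [neg_one_le_cos (2 * π * x / ε)]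
  · nlinarith
  · nlinarith

lemma mul_exp_le_integral_Icc_exp_multiscalePotential (hε : 0 < ε) (hσ : 0 < σ)
    (hα₀ : 0 ≤ α) {r : ℝ} (hr : 4 * ε ≤ r) :
    exp ((1 + α / 2) * (r - 4 * ε) ^ 2 / σ) * (ε / 3) ≤
      ∫ x in Icc 0 r, exp (multiscalePotential ε α x / σ) := by
  obtain ⟨a, hsub, hcos⟩ := exists_Icc_subset_Ioo_forall_half_le_cos hε (r - 4 * ε)
  have hsub' : Icc a (a + ε / 3) ⊆ Icc 0 r := fun x hx => by
    obtain ⟨hx₀, hx₁⟩ := hsub hx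
    exact ⟨by linarith, by linarith⟩
  calc _ = exp ((1 + α / 2) * (r - 4 * ε) ^ 2 / σ) * (a + ε / 3 - a) := by ring
    _ ≤ _ := mul_le_setIntegral_of_Icc_subset (by linarith) hsub'
      (Continuous.integrableOn_Icc (by unfold multiscalePotential; fun_prop))
      (ae_of_all _ fun x => (exp_pos _).le) fun x hx => ?_
  obtain ⟨hx₀, hx₁⟩ := hsub hx
  have hc := hcos x hx
  rw [exp_le_exp, div_le_div_iff_of_pos_right hσ, multiscalePotential, mul_comm]
  gcongr
  nlinarith

lemma tendsto_integral_Ioi_mul_integral_Icc_multiscalePotential (hε : 0 < ε) (hσ : 0 < σ)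
    (hα₀ : 0 < α) (hα₁ : α < 1) :
    Tendsto (fun r => (∫ x in Ioi r, exp (-multiscalePotential ε α x / σ)) *
      ∫ x in Icc 0 r, exp (multiscalePotential ε α x / σ)) atTop atTop := by
  have hq : Tendsto (fun r => ((1 + α / 2) * (r - 4 * ε) ^ 2 - (1 - α / 2) * (r + 3 * ε) ^ 2))
      atTop atTop :=
    (tendsto_quadratic_atTop hα₀ (-(14 + α) * ε) ((7 + 25 * α / 2) * ε ^ 2)).congr
      fun r => by ring
  have hlower := (tendsto_exp_atTop.comp (hq.atTop_div_const hσ)).atTop_mul_const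
    (by positivity : 0 < (ε / 3) ^ 2)
  refine tendsto_atTop_mono' _ ?_ hlower
  filter_upwards [eventually_ge_atTop (4 * ε)] with r hr
  calc _ = exp (-((1 - α / 2) * (r + 3 * ε) ^ 2) / σ) * (ε / 3) *
        (exp ((1 + α / 2) * (r - 4 * ε) ^ 2 / σ) * (ε / 3)) := by
        rw [Function.comp_apply, mul_mul_mul_comm, ← exp_add, ← sq]
        congr 2
        ring
    _ ≤ _ := mul_le_mul (mul_exp_le_integral_Ioi_exp_neg_multiscalePotential hε hσ hα₀.le hα₁
        (by linarith)) (mul_exp_le_integral_Icc_exp_multiscalePotential hε hσ hα₀.le hr)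
        (by positivity) (setIntegral_nonneg measurableSet_Ioi fun x _ => (exp_pos _).le)

end multiscalePotential

/-- For `V(x) = x²(1 + α cos(2πx/ε))` with `0 < α < 1`, the Muckenhoupt
functional `B₊(r) = (∫_r^∞ e^{-V/σ})^{1/2} (∫_0^r e^{V/σ})^{1/2}` is unbounded on `(0,∞)`;
in fact `B₊(ε(2πn + π/2)) → ∞` as `n → ∞`. -/
theorem stmt10 (ε σ α : ℝ) (hε : 0 < ε) (hσ : 0 < σ) (hα0 : 0 < α) (hα1 : α < 1)
    (V : ℝ → ℝ) (hV : ∀ x, V x = x ^ 2 * (1 + α * Real.cos (2 * π * x / ε)))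
    (B : ℝ → ℝ)
    (hB : ∀ r, B r = Real.sqrt (∫ x in Set.Ioi r, Real.exp (-V x / σ)) *
      Real.sqrt (∫ x in Set.Icc (0 : ℝ) r, Real.exp (V x / σ))) :
    ¬ BddAbove (B '' Set.Ioi (0 : ℝ)) ∧
    Tendsto (fun n : ℕ => B (ε * (2 * π * n + π / 2))) atTop atTop := by
  obtain rfl : V = multiscalePotential ε α := funext hV
  have hB_eq : B = fun r => √((∫ x in Ioi r, exp (-multiscalePotential ε α x / σ)) *
      ∫ x in Icc 0 r, exp (multiscalePotential ε α x / σ)) := funext fun r => by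
    rw [hB, sqrt_mul (setIntegral_nonneg measurableSet_Ioi fun x _ => (exp_pos _).le)]
  have hB_tendsto : Tendsto B atTop atTop := hB_eq ▸ tendsto_sqrt_atTop.comp
    (tendsto_integral_Ioi_mul_integral_Icc_multiscalePotential hε hσ hα0 hα1)
  have hpos (n : ℕ) : 0 < ε * (2 * π * n + π / 2) := by positivity
  have hseq : Tendsto (fun n : ℕ => ε * (2 * π * n + π / 2)) atTop atTop :=
    tendsto_atTop_add_const_right _ _
      (tendsto_natCast_atTop_atTop.const_mul_atTop (by positivity)) |>.const_mul_atTop hε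
  refine ⟨fun hbdd => not_bddAbove_of_tendsto_atTop (hB_tendsto.comp hseq) (hbdd.mono ?_),
    hB_tendsto.comp hseq⟩
  rintro _ ⟨n, rfl⟩
  exact mem_image_of_mem B (hpos n)
end

section
/- Let σ > 0 and α > 0. For ε > 0 let π^ε be the probability density on ℝ proportional to e^{-(x²/2 + α sin(2πx/ε))/σ}, and let π⁰(x) = (2πσ)^{-1/2} e^{-x²/(2σ)} be the standard Gaussian density with variance σ. Set I₀ = ∫_0^1 e^{-(α/σ) sin(2πy)} dy. Then liminf_{ε → 0⁺} ∫_ℝ |π^ε(x) − π⁰(x)| dx ≥ (1/6)·(1 − e^{-α/(2σ)}/I₀) > 0. In particular, π^ε does not converge to π⁰ in total variation as ε → 0. -/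
/-!
Write `π^ε(x) = p(x) w(x/ε) / Z_ε` with `p` the `N(0, σ)` density and `w(y) = e^{-(α/σ) sin 2πy}`,
which is 1-periodic. On an ε-period inside `[-L, L]` the Gaussian varies by a factor at most
`e^{Lε/σ}`, so `∫ p(x) g(x/ε) dx ≥ (1 - o(1)) ∫₀¹ g` for every continuous 1-periodic `g ≥ 0`.
For `g = w` this gives `Z_ε ≥ (1 - o(1)) I₀`. On the third of each period where `sin ≥ 1/2` we
have `w ≤ e^{-α/(2σ)}`, hence `π⁰ - π^ε ≥ p (1 - e^{-α/(2σ)}/Z_ε)` there; averaging the positive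
part of `1 - w/Z_ε` in the same way gives `∫ |π^ε - π⁰| ≥ (1 - o(1)) (1 - e^{-α/(2σ)}/I₀) / 3`.
-/

open MeasureTheory Filter Real intervalIntegral Topology Set Function ProbabilityTheory
open scoped NNReal

theorem integral_mul_integral_le_of_harnack {f g : ℝ → ℝ} {a b C : ℝ} (hab : a ≤ b)
    (hf : Continuous f) (hg : Continuous g) (hg0 : ∀ x ∈ Icc a b, 0 ≤ g x)
    (hC : ∀ x ∈ Icc a b, ∀ y ∈ Icc a b, f y ≤ C * f x) :
    (∫ x in a..b, f x) * ∫ x in a..b, g x ≤ C * (b - a) * ∫ x in a..b, f x * g x := by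
  have hpt : ∀ x ∈ Icc a b, (∫ y in a..b, f y) * g x ≤ C * (b - a) * (f x * g x) := by
    intro x hx
    have hfx : ∫ y in a..b, f y ≤ C * ((b - a) * f x) := by
      simpa using integral_mono_on hab (hf.intervalIntegrable a b)
        (intervalIntegrable_const (μ := volume))
        (fun y hy => hC x hx y hy)
    calc (∫ y in a..b, f y) * g x ≤ C * ((b - a) * f x) * g x :=
          mul_le_mul_of_nonneg_right hfx (hg0 x hx)
      _ = C * (b - a) * (f x * g x) := by ring
  rw [← intervalIntegral.integral_const_mul, ← intervalIntegral.integral_const_mul]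
  exact integral_mono_on hab ((hg.intervalIntegrable a b).const_mul _)
    (((hf.mul hg).intervalIntegrable a b).const_mul _) hpt

theorem Function.Periodic.intervalIntegral_comp_div {g : ℝ → ℝ} (hg : Periodic g 1)
    {ε : ℝ} (hε : ε ≠ 0) (a : ℝ) :
    ∫ x in a..a + ε, g (x / ε) = ε * ∫ y in (0 : ℝ)..1, g y := by
  rw [integral_comp_div _ hε, add_div, div_self hε, hg.intervalIntegral_add_eq (a / ε) 0,
    zero_add, smul_eq_mul]

theorem integral_periodic_mul_integral_le_of_harnack {p g : ℝ → ℝ} (hp : Continuous p)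
    (hg : Continuous g) (hg0 : ∀ y, 0 ≤ g y) (hper : Periodic g 1) {ε C : ℝ} (hε : 0 < ε) (N : ℕ)
    (hC : ∀ x ∈ Icc (-(N * ε)) (N * ε), ∀ y ∈ Icc (-(N * ε)) (N * ε),
      |x - y| ≤ ε → p y ≤ C * p x) :
    (∫ y in (0 : ℝ)..1, g y) * ∫ x in -(N * ε)..N * ε, p x
      ≤ C * ∫ x in -(N * ε)..N * ε, p x * g (x / ε) := by
  set a : ℕ → ℝ := fun i => -(N * ε) + i * ε
  have hgε : Continuous fun x => g (x / ε) := hg.comp (continuous_id.div_const ε)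
  have hperiod : ∀ i ∈ Finset.range (2 * N),
      (∫ y in (0 : ℝ)..1, g y) * ∫ x in a i..a (i + 1), p x
        ≤ C * ∫ x in a i..a (i + 1), p x * g (x / ε) := by
    intro i hi
    have hi : (i : ℝ) + 1 ≤ 2 * N := by exact_mod_cast Finset.mem_range.1 hi
    have hsucc : a (i + 1) = a i + ε := by simp only [a]; push_cast; ring
    have hsub : Icc (a i) (a i + ε) ⊆ Icc (-(N * ε)) (N * ε) :=
      Icc_subset_Icc (by simp only [a]; nlinarith [i.cast_nonneg (α := ℝ)])
        (by simp only [a]; nlinarith)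
    have h := integral_mul_integral_le_of_harnack (by linarith) hp hgε (fun x _ => hg0 _)
      fun x hx y hy => hC x (hsub hx) y (hsub hy)
        (abs_sub_le_iff.2 ⟨by linarith [hx.2, hy.1], by linarith [hx.1, hy.2]⟩)
    rw [hper.intervalIntegral_comp_div hε.ne', add_sub_cancel_left] at h
    rw [hsucc]
    exact le_of_mul_le_mul_left (by linarith) hε
  have hsum := Finset.sum_le_sum hperiod
  rw [← Finset.mul_sum, ← Finset.mul_sum,
    sum_integral_adjacent_intervals fun i _ => hp.intervalIntegrable _ _,
    sum_integral_adjacent_intervals (f := fun x => p x * g (x / ε))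
      fun i _ => (hp.mul hgε).intervalIntegrable _ _] at hsum
  have ha0 : a 0 = -(N * ε) := by simp [a]
  have haN : a (2 * N) = N * ε := by simp only [a]; push_cast; ring
  rwa [ha0, haN] at hsum

theorem continuous_gaussianPDFReal (μ : ℝ) (v : ℝ≥0) : Continuous (gaussianPDFReal μ v) := by
  rw [gaussianPDFReal_def]; fun_prop

theorem gaussianPDFReal_le_exp_mul (v : ℝ≥0) {L ε x y : ℝ} (hx : x ∈ Icc (-L) L)
    (hy : y ∈ Icc (-L) L) (hxy : |x - y| ≤ ε) :
    gaussianPDFReal 0 v y ≤ exp (L * ε / v) * gaussianPDFReal 0 v x := by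
  have hsq : x ^ 2 - y ^ 2 ≤ 2 * (L * ε) := by
    have hsum : |x + y| ≤ 2 * L := abs_le.2 ⟨by linarith [hx.1, hy.1], by linarith [hx.2, hy.2]⟩
    calc x ^ 2 - y ^ 2 = (x - y) * (x + y) := by ring
      _ ≤ |x - y| * |x + y| := by rw [← abs_mul]; exact le_abs_self _
      _ ≤ ε * (2 * L) := mul_le_mul hxy hsum (abs_nonneg _) ((abs_nonneg _).trans hxy)
      _ = 2 * (L * ε) := by ring
  simp only [gaussianPDFReal, sub_zero]
  rw [mul_left_comm, ← exp_add]
  gcongr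
  rw [← mul_div_mul_left (L * ε) _ two_ne_zero, ← add_div]
  exact div_le_div_of_nonneg_right (by linarith) (by positivity)

theorem MeasureTheory.Integrable.mul_comp_div_of_periodic {p g : ℝ → ℝ} (hp : Integrable p)
    (hg : Continuous g) (hper : Periodic g 1) (ε : ℝ) :
    Integrable fun x => p x * g (x / ε) := by
  obtain ⟨C, hC⟩ := (hper.isBounded_of_continuous one_ne_zero hg).exists_norm_le
  exact hp.mul_bdd (hg.comp (continuous_id.div_const ε)).aestronglyMeasurable
    (Eventually.of_forall fun x => hC _ (mem_range_self _))

theorem exp_mul_integral_gaussianPDFReal_le_integral_mul_periodic (v : ℝ≥0) {g : ℝ → ℝ}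
    (hg : Continuous g) (hg0 : ∀ y, 0 ≤ g y) (hper : Periodic g 1) {ε K : ℝ} (hε : 0 < ε)
    (hK : 0 ≤ K) :
    exp (-((K + ε) * ε / v)) * (∫ y in (0 : ℝ)..1, g y) * ∫ x in -K..K, gaussianPDFReal 0 v x
      ≤ ∫ x, gaussianPDFReal 0 v x * g (x / ε) := by
  set p := gaussianPDFReal 0 v
  set L : ℝ := ⌈K / ε⌉₊ * ε
  have hKL : K ≤ L := by rw [← div_le_iff₀ hε]; exact Nat.le_ceil _
  have hLK : L ≤ K + ε := by
    calc L ≤ (K / ε + 1) * ε :=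
          mul_le_mul_of_nonneg_right (Nat.ceil_lt_add_one (div_nonneg hK hε.le)).le hε.le
      _ = K + ε := by field_simp
  have hp0 : ∀ x, 0 ≤ p x := gaussianPDFReal_nonneg 0 v
  have hpg0 : ∀ x, 0 ≤ p x * g (x / ε) := fun x => mul_nonneg (hp0 x) (hg0 _)
  have hharnack := integral_periodic_mul_integral_le_of_harnack
    (continuous_gaussianPDFReal 0 v) hg hg0 hper hε ⌈K / ε⌉₊
    fun x hx y hy hxy => gaussianPDFReal_le_exp_mul v hx hy hxy
  have hI0 : 0 ≤ ∫ y in (0 : ℝ)..1, g y := integral_nonneg zero_le_one fun y _ => hg0 y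
  calc exp (-((K + ε) * ε / v)) * (∫ y in (0 : ℝ)..1, g y) * ∫ x in -K..K, p x
      ≤ exp (-(L * ε / v)) * ((∫ y in (0 : ℝ)..1, g y) * ∫ x in -L..L, p x) := by
        rw [mul_assoc]
        gcongr
        · exact mul_nonneg hI0 (integral_nonneg (by linarith) fun x _ => hp0 x)
        · exact integral_mono_interval (by linarith) (by linarith) hKL
            (Eventually.of_forall hp0) ((continuous_gaussianPDFReal 0 v).intervalIntegrable _ _)
    _ ≤ ∫ x in -L..L, p x * g (x / ε) := by
        rw [exp_neg, inv_mul_le_iff₀ (exp_pos _)]; exact hharnack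
    _ ≤ ∫ x, p x * g (x / ε) := by
        rw [intervalIntegral.integral_of_le (show -L ≤ L by linarith)]
        exact setIntegral_le_integral
          ((integrable_gaussianPDFReal 0 v).mul_comp_div_of_periodic hg hper ε)
          (Eventually.of_forall hpg0)

noncomputable def expSinWeight (c y : ℝ) : ℝ := exp (-c * sin (2 * π * y))

theorem continuous_expSinWeight (c : ℝ) : Continuous (expSinWeight c) := by
  unfold expSinWeight; fun_prop

theorem periodic_expSinWeight (c : ℝ) : Periodic (expSinWeight c) 1 := by
  intro y; simp only [expSinWeight, mul_add, mul_one, sin_add_two_pi]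

theorem expSinWeight_pos (c y : ℝ) : 0 < expSinWeight c y := exp_pos _

theorem one_le_integral_expSinWeight (c : ℝ) : 1 ≤ ∫ y in (0 : ℝ)..1, expSinWeight c y := by
  have hsin : ∫ y in (0 : ℝ)..1, sin (2 * π * y) = 0 := by
    rw [integral_comp_mul_left sin (by positivity : (2 * π : ℝ) ≠ 0)]
    simp [cos_two_pi]
  have hlin : ∫ y in (0 : ℝ)..1, (1 + -c * sin (2 * π * y)) = 1 := by
    rw [integral_add intervalIntegrable_const (by apply Continuous.intervalIntegrable; fun_prop),
      intervalIntegral.integral_const_mul, hsin]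
    simp
  calc (1 : ℝ) = ∫ y in (0 : ℝ)..1, (1 + -c * sin (2 * π * y)) := hlin.symm
    _ ≤ ∫ y in (0 : ℝ)..1, expSinWeight c y :=
      integral_mono_on zero_le_one (by apply Continuous.intervalIntegrable; fun_prop)
        ((continuous_expSinWeight c).intervalIntegrable _ _)
        fun y _ => by rw [add_comm]; exact add_one_le_exp _

theorem half_le_sin_two_pi_mul {t : ℝ} (ht : t ∈ Icc (1 / 12 : ℝ) (5 / 12)) :
    1 / 2 ≤ sin (2 * π * t) := by
  have hπ := pi_pos
  have key : ∀ θ : ℝ, π / 6 ≤ θ → θ ≤ π / 2 → 1 / 2 ≤ sin θ := fun θ h1 h2 => by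
    rw [← sin_pi_div_six]
    exact strictMonoOn_sin.monotoneOn ⟨by linarith, by linarith⟩ ⟨by linarith, h2⟩ h1
  rcases le_or_gt (2 * π * t) (π / 2) with h | h
  · exact key _ (by nlinarith [ht.1]) h
  · rw [← sin_pi_sub]
    exact key _ (by nlinarith [ht.2]) (by linarith)

theorem expSinWeight_le_of_mem_Icc {c y : ℝ} (hc : 0 ≤ c)
    (hy : y ∈ Icc (1 / 12 : ℝ) (5 / 12)) :
    expSinWeight c y ≤ exp (-c / 2) := by
  unfold expSinWeight
  gcongr
  nlinarith [half_le_sin_two_pi_mul hy]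

theorem div_three_le_integral_max_one_sub_div {c Z : ℝ} (hc : 0 ≤ c) (hZ : 0 ≤ Z) :
    (1 - exp (-c / 2) / Z) / 3 ≤ ∫ y in (0 : ℝ)..1, max (1 - expSinWeight c y / Z) 0 := by
  have hcont : Continuous fun y => max (1 - expSinWeight c y / Z) 0 := by
    have := continuous_expSinWeight c; fun_prop
  calc (1 - exp (-c / 2) / Z) / 3 = ∫ _ in (1 / 12 : ℝ)..5 / 12, (1 - exp (-c / 2) / Z) := by
        simp only [intervalIntegral.integral_const, smul_eq_mul]; ring
    _ ≤ ∫ y in (1 / 12 : ℝ)..5 / 12, max (1 - expSinWeight c y / Z) 0 :=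
        integral_mono_on (by norm_num) intervalIntegrable_const (hcont.intervalIntegrable _ _)
          fun y hy => le_max_of_le_left (by gcongr; exact expSinWeight_le_of_mem_Icc hc hy)
    _ ≤ ∫ y in (0 : ℝ)..1, max (1 - expSinWeight c y / Z) 0 :=
        integral_mono_interval (by norm_num) (by norm_num) (by norm_num)
          (Eventually.of_forall fun y => le_max_right _ _) (hcont.intervalIntegrable _ _)

-- `π^ε`, with numerator and partition function both divided by `√(2πσ)`.
noncomputable def gibbsDensity (v : ℝ≥0) (c ε x : ℝ) : ℝ :=
  gaussianPDFReal 0 v x * expSinWeight c (x / ε) /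
    ∫ z, gaussianPDFReal 0 v z * expSinWeight c (z / ε)

theorem exp_neg_potential_div_eq {σ : ℝ} (hσ : 0 < σ) (α ε x : ℝ) :
    exp (-(x ^ 2 / 2 + α * sin (2 * π * x / ε)) / σ)
      = √(2 * π * σ) * (gaussianPDFReal 0 σ.toNNReal x * expSinWeight (α / σ) (x / ε)) := by
  have hG : √(2 * π * σ) ≠ 0 := (sqrt_pos.2 (by positivity)).ne'
  simp only [gaussianPDFReal, expSinWeight, Real.coe_toNNReal _ hσ.le, sub_zero]
  rw [← mul_assoc, ← mul_assoc, mul_inv_cancel₀ hG, one_mul, ← exp_add]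
  congr 1
  field_simp
  ring

theorem gibbsDensity_eq {σ : ℝ} (hσ : 0 < σ) (α ε x : ℝ) :
    gibbsDensity σ.toNNReal (α / σ) ε x
      = exp (-(x ^ 2 / 2 + α * sin (2 * π * x / ε)) / σ) /
          ∫ z, exp (-(z ^ 2 / 2 + α * sin (2 * π * z / ε)) / σ) := by
  simp only [exp_neg_potential_div_eq hσ, MeasureTheory.integral_const_mul]
  unfold gibbsDensity
  exact (mul_div_mul_left _ _ (sqrt_pos.2 (by positivity)).ne').symm

theorem integrable_gaussianPDFReal_mul_expSinWeight (v : ℝ≥0) (c ε : ℝ) :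
    Integrable fun x => gaussianPDFReal 0 v x * expSinWeight c (x / ε) :=
  (integrable_gaussianPDFReal 0 v).mul_comp_div_of_periodic (continuous_expSinWeight c)
    (periodic_expSinWeight c) ε

theorem integral_abs_sub_le_add {α : Type*} [MeasurableSpace α] {μ : Measure α} {f g : α → ℝ}
    (hf : Integrable f μ) (hg : Integrable g μ) (hf0 : ∀ x, 0 ≤ f x) (hg0 : ∀ x, 0 ≤ g x) :
    ∫ x, |f x - g x| ∂μ ≤ ∫ x, f x ∂μ + ∫ x, g x ∂μ := by
  rw [← integral_add hf hg]
  exact integral_mono (hf.sub hg).abs (hf.add hg) fun x =>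
    abs_sub_le_iff.2 ⟨by linarith [hg0 x], by linarith [hf0 x]⟩

theorem integral_abs_gibbsDensity_sub_le_two {v : ℝ≥0} (hv : v ≠ 0) (c ε : ℝ) :
    ∫ x, |gibbsDensity v c ε x - gaussianPDFReal 0 v x| ≤ 2 := by
  have hZ0 : 0 ≤ ∫ z, gaussianPDFReal 0 v z * expSinWeight c (z / ε) :=
    integral_nonneg fun z => mul_nonneg (gaussianPDFReal_nonneg 0 v z) (expSinWeight_pos _ _).le
  have h := integral_abs_sub_le_add
    ((integrable_gaussianPDFReal_mul_expSinWeight v c ε).div_const _)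
    (integrable_gaussianPDFReal 0 v)
    (fun x => div_nonneg
      (mul_nonneg (gaussianPDFReal_nonneg 0 v x) (expSinWeight_pos _ _).le) hZ0)
    (gaussianPDFReal_nonneg 0 v)
  rw [MeasureTheory.integral_div, integral_gaussianPDFReal_eq_one 0 hv] at h
  have h1 := div_self_le_one (∫ z, gaussianPDFReal 0 v z * expSinWeight c (z / ε))
  unfold gibbsDensity
  linarith

theorem div_three_le_integral_abs_gibbsDensity_sub (v : ℝ≥0) {c ε K : ℝ} (hc : 0 ≤ c)
    (hε : 0 < ε) (hK : 0 ≤ K) (hQ : 0 < ∫ x in -K..K, gaussianPDFReal 0 v x) :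
    (exp (-((K + ε) * ε / v)) * (∫ x in -K..K, gaussianPDFReal 0 v x)
        - exp (-c / 2) / ∫ y in (0 : ℝ)..1, expSinWeight c y) / 3
      ≤ ∫ x, |gibbsDensity v c ε x - gaussianPDFReal 0 v x| := by
  set p := gaussianPDFReal 0 v
  set I := ∫ y in (0 : ℝ)..1, expSinWeight c y
  set Z := ∫ z, p z * expSinWeight c (z / ε)
  set lam := exp (-((K + ε) * ε / v)) * ∫ x in -K..K, p x
  have hI : 1 ≤ I := one_le_integral_expSinWeight c
  have hlam : 0 < lam := mul_pos (exp_pos _) hQ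
  have hZ : lam * I ≤ Z := by
    have := exp_mul_integral_gaussianPDFReal_le_integral_mul_periodic v
      (continuous_expSinWeight c) (fun y => (expSinWeight_pos c y).le) (periodic_expSinWeight c)
      hε hK
    linarith
  have hZpos : 0 < Z := (mul_pos hlam (by linarith)).trans_le hZ
  set h := fun y => max (1 - expSinWeight c y / Z) 0
  have hcont : Continuous h := by have := continuous_expSinWeight c; fun_prop
  have hper : Periodic h 1 := fun y => by simp only [h, periodic_expSinWeight c y]
  have hpt : ∀ x, p x * h (x / ε) ≤ |gibbsDensity v c ε x - p x| := by
    intro x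
    have hp0 : 0 ≤ p x := gaussianPDFReal_nonneg 0 v x
    have heq : gibbsDensity v c ε x - p x = p x * (expSinWeight c (x / ε) / Z - 1) := by
      simp only [gibbsDensity, p, Z]; ring
    rw [heq, abs_mul, abs_of_nonneg hp0]
    exact mul_le_mul_of_nonneg_left
      (max_le (by rw [abs_sub_comm]; exact le_abs_self _) (abs_nonneg _)) hp0
  calc (lam - exp (-c / 2) / I) / 3 = lam * ((1 - exp (-c / 2) / (lam * I)) / 3) := by
        field_simp
    _ ≤ lam * ((1 - exp (-c / 2) / Z) / 3) := by gcongr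
    _ ≤ lam * ∫ y in (0 : ℝ)..1, h y := by
        gcongr; exact div_three_le_integral_max_one_sub_div hc hZpos.le
    _ = exp (-((K + ε) * ε / v)) * (∫ y in (0 : ℝ)..1, h y) * ∫ x in -K..K, p x := by ring
    _ ≤ ∫ x, p x * h (x / ε) :=
        exp_mul_integral_gaussianPDFReal_le_integral_mul_periodic v hcont
          (fun y => le_max_right _ _) hper hε hK
    _ ≤ ∫ x, |gibbsDensity v c ε x - p x| :=
        integral_mono ((integrable_gaussianPDFReal 0 v).mul_comp_div_of_periodic hcont hper ε)
          (((integrable_gaussianPDFReal_mul_expSinWeight v c ε).div_const Z).sub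
            (integrable_gaussianPDFReal 0 v)).abs hpt

theorem exp_neg_half_div_integral_expSinWeight_lt_one {c : ℝ} (hc : 0 < c) :
    exp (-c / 2) / ∫ y in (0 : ℝ)..1, expSinWeight c y < 1 := by
  have hI := one_le_integral_expSinWeight c
  rw [div_lt_one (by linarith)]
  exact (exp_lt_one_iff.2 (by linarith)).trans_le hI

theorem eventually_div_six_le_integral_abs_gibbsDensity_sub {v : ℝ≥0} (hv : v ≠ 0) {c : ℝ}
    (hc : 0 < c) :
    ∀ᶠ ε in 𝓝[>] 0, (1 - exp (-c / 2) / ∫ y in (0 : ℝ)..1, expSinWeight c y) / 6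
      ≤ ∫ x, |gibbsDensity v c ε x - gaussianPDFReal 0 v x| := by
  set r := exp (-c / 2) / ∫ y in (0 : ℝ)..1, expSinWeight c y
  have hr1 : r < 1 := exp_neg_half_div_integral_expSinWeight_lt_one hc
  have hr0 : 0 < r := div_pos (exp_pos _) (by linarith [one_le_integral_expSinWeight c])
  have hQ : Tendsto (fun K => ∫ x in -K..K, gaussianPDFReal 0 v x) atTop (𝓝 1) := by
    simpa [integral_gaussianPDFReal_eq_one 0 hv] using intervalIntegral_tendsto_integral
      (integrable_gaussianPDFReal 0 v) tendsto_neg_atTop_atBot tendsto_id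
  obtain ⟨K, hKQ, hK⟩ := ((hQ.eventually (lt_mem_nhds (by linarith : (1 + r) / 2 < 1))).and
    (eventually_ge_atTop 0)).exists
  have hlam : Tendsto (fun ε => exp (-((K + ε) * ε / v)) * ∫ x in -K..K, gaussianPDFReal 0 v x)
      (𝓝[>] 0) (𝓝 (∫ x in -K..K, gaussianPDFReal 0 v x)) := by
    have : Continuous fun ε => exp (-((K + ε) * ε / v)) * ∫ x in -K..K, gaussianPDFReal 0 v x :=
      by fun_prop
    simpa using (this.tendsto 0).mono_left nhdsWithin_le_nhds
  filter_upwards [hlam.eventually (lt_mem_nhds hKQ), self_mem_nhdsWithin] with ε hlamε hε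
  have := div_three_le_integral_abs_gibbsDensity_sub v hc.le hε hK (by linarith)
  linarith

/-- The Gibbs densities `π^ε ∝ e^{-(x²/2 + α sin(2πx/ε))/σ}` stay boundedly
away (in total variation) from their weak limit, the Gaussian `π⁰ = N(0,σ)`:
`liminf_{ε→0⁺} ∫ |π^ε - π⁰| ≥ (1/6)(1 - e^{-α/(2σ)}/I₀) > 0`,
where `I₀ = ∫_0^1 e^{-(α/σ) sin(2πy)} dy`. -/
theorem stmt11 (σ α : ℝ) (hσ : 0 < σ) (hα : 0 < α)
    (πeps : ℝ → ℝ → ℝ)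
    (hπeps : ∀ ε x, πeps ε x =
      Real.exp (-(x ^ 2 / 2 + α * Real.sin (2 * π * x / ε)) / σ) /
        ∫ z, Real.exp (-(z ^ 2 / 2 + α * Real.sin (2 * π * z / ε)) / σ))
    (π0 : ℝ → ℝ)
    (hπ0 : ∀ x, π0 x = (Real.sqrt (2 * π * σ))⁻¹ * Real.exp (-x ^ 2 / (2 * σ)))
    (I₀ : ℝ)
    (hI₀ : I₀ = ∫ y in (0:ℝ)..1, Real.exp (-(α / σ) * Real.sin (2 * π * y))) :
    (1 / 6) * (1 - Real.exp (-α / (2 * σ)) / I₀) ≤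
      liminf (fun ε : ℝ => ∫ x, |πeps ε x - π0 x|) (nhdsWithin 0 (Set.Ioi 0)) ∧
    0 < (1 / 6) * (1 - Real.exp (-α / (2 * σ)) / I₀) ∧
    ¬ Tendsto (fun ε : ℝ => ∫ x, |πeps ε x - π0 x|) (nhdsWithin 0 (Set.Ioi 0)) (nhds 0) := by
  have hv : σ.toNNReal ≠ 0 := (Real.toNNReal_pos.2 hσ).ne'
  have hTV : (fun ε => ∫ x, |πeps ε x - π0 x|)
      = fun ε => ∫ x, |gibbsDensity σ.toNNReal (α / σ) ε x - gaussianPDFReal 0 σ.toNNReal x| := by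
    simp only [hπeps, hπ0, gibbsDensity_eq hσ, gaussianPDFReal, Real.coe_toNNReal _ hσ.le,
      sub_zero]
  have hbound : (1 / 6) * (1 - exp (-α / (2 * σ)) / I₀)
      = (1 - exp (-(α / σ) / 2) / ∫ y in (0 : ℝ)..1, expSinWeight (α / σ) y) / 6 := by
    rw [hI₀, show -(α / σ) / 2 = -α / (2 * σ) by ring]
    unfold expSinWeight
    ring
  have hc : 0 < α / σ := div_pos hα hσ
  have hev := eventually_div_six_le_integral_abs_gibbsDensity_sub hv hc
  have hpos : 0 < (1 - exp (-(α / σ) / 2) / ∫ y in (0 : ℝ)..1, expSinWeight (α / σ) y) / 6 := by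
    linarith [exp_neg_half_div_integral_expSinWeight_lt_one hc]
  rw [hTV, hbound]
  refine ⟨le_liminf_of_le (isCoboundedUnder_ge_of_le _
    fun ε => integral_abs_gibbsDensity_sub_le_two hv _ ε) hev, hpos, fun hT => ?_⟩
  obtain ⟨ε, hε, hε0⟩ := (hev.and (hT.eventually (gt_mem_nhds hpos))).exists
  linarith
end
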